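/- arXiv:2405.04711 — 8 statements merged into one kernel-verified Lean document; each statement's English description precedes it below -/
import Mathlib

section
/- Let K = rank(Σ_{l=1}^L B_l B_l^T) with K ≤ K_r, and let U_r be an n_r × K real matrix with orthonormal columns and Λ_r a K × K diagonal matrix with nonzero diagonal entries such that S̃_r = U_r Λ_r U_r^T. Then there exists a K_r × K real matrix X_r such that U_r = Θ_r Z_r X_r; consequently every row of U_r is θ_r(i) times the row of X_r indexed by the community of node i. In particular, if all rows of U_r are nonzero and U_r*(i,:) = U_r(i,:)/‖U_r(i,:)‖ denotes the row-normalized matrix, then Z_r(i,:) = Z_r(ĩ,:) implies U_r*(i,:) = U_r*(ĩ,:) for all i, ĩ ∈ [n_r]. -/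
open Matrix Finset

/-- part of Lemma 1 of the paper, row part, existence of `X_r`.
Under the multi-layer DC-ScBM parameterization, if `S̃_r = U_r Λ_r U_rᵀ` with `U_r` having
orthonormal columns and `Λ_r` a diagonal matrix with nonzero diagonal, where
`K = rank (∑ l, B l * (B l)ᵀ) ≤ K_r`, then `U_r = Θ_r Z_r X_r` for some `X_r`; every row of
`U_r` is `θ_r i` times the row of `X_r` indexed by the community of `i`, and hence (if all rows
of `U_r` are nonzero) nodes in the same community have equal normalized rows. -/
theorem stmt0
    (nr nc Kr Kc L K : ℕ)
    (hnr : 0 < nr) (hnc : 0 < nc) (hKr : 0 < Kr) (hKc : 0 < Kc) (hL : 0 < L)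
    (Zr : Matrix (Fin nr) (Fin Kr) ℝ) (Zc : Matrix (Fin nc) (Fin Kc) ℝ)
    (hZr01 : ∀ i k, Zr i k = 0 ∨ Zr i k = 1)
    (hZrrow : ∀ i, ∃! k, Zr i k = 1)
    (hZrcol : ∀ k, ∃ i, Zr i k = 1)
    (hZc01 : ∀ j k, Zc j k = 0 ∨ Zc j k = 1)
    (hZcrow : ∀ j, ∃! k, Zc j k = 1)
    (hZccol : ∀ k, ∃ j, Zc j k = 1)
    (θr : Fin nr → ℝ) (θc : Fin nc → ℝ)
    (hθr : ∀ i, 0 < θr i ∧ θr i ≤ 1) (hθc : ∀ j, 0 < θc j ∧ θc j ≤ 1)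
    (B : Fin L → Matrix (Fin Kr) (Fin Kc) ℝ)
    (hB01 : ∀ l k k', 0 ≤ B l k k' ∧ B l k k' ≤ 1)
    (Ωm : Fin L → Matrix (Fin nr) (Fin nc) ℝ)
    (hΩm : ∀ l, Ωm l = Matrix.diagonal θr * Zr * B l * (Zc)ᵀ * Matrix.diagonal θc)
    (Str : Matrix (Fin nr) (Fin nr) ℝ)
    (hStr : Str = ∑ l, Ωm l * (Ωm l)ᵀ)
    (hK : K = (∑ l, B l * (B l)ᵀ).rank) (hKle : K ≤ Kr)
    (Ur : Matrix (Fin nr) (Fin K) ℝ) (Λr : Fin K → ℝ)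
    (hΛ : ∀ k, Λr k ≠ 0)
    (hUorth : (Ur)ᵀ * Ur = 1)
    (hdecomp : Str = Ur * Matrix.diagonal Λr * (Ur)ᵀ) :
    (∃ X : Matrix (Fin Kr) (Fin K) ℝ,
      Ur = Matrix.diagonal θr * Zr * X ∧
      ∀ i kr, Zr i kr = 1 → ∀ k, Ur i k = θr i * X kr k) ∧
    ((∀ i, Ur i ≠ 0) → ∀ i i₂, Zr i = Zr i₂ →
      (fun k => Ur i k / Real.sqrt (∑ k', (Ur i k') ^ 2)) =
      (fun k => Ur i₂ k / Real.sqrt (∑ k', (Ur i₂ k') ^ 2))) := by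
  classical
  set M : Matrix (Fin Kr) (Fin Kr) ℝ :=
    ∑ l, B l * (Zc)ᵀ * Matrix.diagonal θc * (Matrix.diagonal θc * Zc * (B l)ᵀ) with hM
  set X : Matrix (Fin Kr) (Fin K) ℝ :=
    M * (Zr)ᵀ * Matrix.diagonal θr * Ur * Matrix.diagonal (fun k => (Λr k)⁻¹) with hX
  have hS : Str = Matrix.diagonal θr * Zr * (M * ((Zr)ᵀ * Matrix.diagonal θr)) := by
    rw [hStr, hM]
    simp only [hΩm, Matrix.transpose_mul, Matrix.diagonal_transpose,
      Matrix.mul_sum, Matrix.sum_mul, Matrix.transpose_transpose, Matrix.mul_assoc]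
  have hU : Matrix.diagonal θr * Zr * X = Ur := by
    have h1 : Matrix.diagonal θr * Zr * X
        = Str * (Ur * Matrix.diagonal (fun k => (Λr k)⁻¹)) := by
      rw [hS, hX]; simp only [Matrix.mul_assoc]
    rw [h1, hdecomp]
    have h2 : Ur * Matrix.diagonal Λr * (Ur)ᵀ * (Ur * Matrix.diagonal fun k => (Λr k)⁻¹)
        = Ur * (Matrix.diagonal Λr * ((Ur)ᵀ * Ur) * Matrix.diagonal fun k => (Λr k)⁻¹) := by
      simp only [Matrix.mul_assoc]
    rw [h2, hUorth, mul_one, Matrix.diagonal_mul_diagonal]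
    have : (fun k => Λr k * (Λr k)⁻¹) = fun _ => (1 : ℝ) := by
      funext k; exact mul_inv_cancel₀ (hΛ k)
    rw [this, Matrix.diagonal_one, Matrix.mul_one]
  have hrow : ∀ i kr, Zr i kr = 1 → ∀ k, Ur i k = θr i * X kr k := by
    intro i kr hkr k
    have hzero : ∀ j, j ≠ kr → Zr i j = 0 := by
      intro j hj
      rcases hZr01 i j with h | h
      · exact h
      · exact absurd ((hZrrow i).unique h hkr) hj
    rw [← hU]
    rw [Matrix.mul_apply]
    rw [Finset.sum_eq_single kr]
    · rw [Matrix.mul_apply, Finset.sum_eq_single i]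
      · simp [Matrix.diagonal, hkr]
      · intro b _ hb; simp [Matrix.diagonal_apply_ne _ (Ne.symm hb)]
      · simp
    · intro b _ hb
      have : (Matrix.diagonal θr * Zr) i b = θr i * Zr i b := by
        rw [Matrix.mul_apply, Finset.sum_eq_single i]
        · simp [Matrix.diagonal]
        · intro c _ hc; simp [Matrix.diagonal_apply_ne _ (Ne.symm hc)]
        · simp
      rw [this, hzero b hb]; ring
    · simp
  refine ⟨⟨X, hU.symm, hrow⟩, ?_⟩
  intro _ i i₂ hzz
  obtain ⟨kr, hkr, _⟩ := hZrrow i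
  have hkr₂ : Zr i₂ kr = 1 := by rw [← hzz]; exact hkr
  funext k
  have key : ∀ j : Fin nr, Zr j kr = 1 →
      Ur j k / Real.sqrt (∑ k', (Ur j k') ^ 2)
        = X kr k / Real.sqrt (∑ k', (X kr k') ^ 2) := by
    intro j hj
    have hθ := (hθr j).1
    have h1 : ∀ k', Ur j k' = θr j * X kr k' := hrow j kr hj
    have h2 : (∑ k', (Ur j k') ^ 2) = θr j ^ 2 * ∑ k', (X kr k') ^ 2 := by
      simp only [h1, mul_pow, Finset.mul_sum]
    have h3 : Real.sqrt (∑ k', (Ur j k') ^ 2)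
        = θr j * Real.sqrt (∑ k', (X kr k') ^ 2) := by
      rw [h2, Real.sqrt_mul (sq_nonneg _), Real.sqrt_sq hθ.le]
    rw [h1 k, h3, mul_div_mul_left _ _ (ne_of_gt hθ)]
  rw [key i hkr, key i₂ hkr₂]
end

section
/- Suppose Σ_{l=1}^L B_l B_l^T has full rank K_r. Let U_r be an n_r × K_r real matrix with orthonormal columns and Λ_r a K_r × K_r diagonal matrix with nonzero diagonal entries such that S̃_r = U_r Λ_r U_r^T, and suppose every row of U_r is nonzero. Let U_r* be the matrix obtained from U_r by normalizing each row to unit Euclidean length. Then for all i, ĩ ∈ [n_r]: U_r*(i,:) = U_r*(ĩ,:) if and only if Z_r(i,:) = Z_r(ĩ,:); moreover, whenever Z_r(i,:) ≠ Z_r(ĩ,:) one has ‖U_r*(i,:) − U_r*(ĩ,:)‖ = √2 (i.e., the normalized rows of distinct communities are orthogonal unit vectors). -/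
/-!
The eigen-equation `Ur = Str * Ur * Λr⁻¹` together with the factorization
`Str = (Θr Zr) N (Θr Zr)ᵀ` gives `Ur = Θr Zr Q` for a square matrix `Q`, so row `i` of `Ur` is
`θr i • Q (c i)`, with `c i` the community of `i`. Orthonormality of the columns of `Ur` then reads
`Qᵀ D Q = 1`, where `D` is the diagonal of community masses `∑_{c i = k} θr i ²`, all positive
because no community is empty. Hence `V = D^{1/2} Q` is an orthogonal matrix, every row of `Ur`
is a positive multiple of the unit vector `V (c i)`, and the normalized rows are rows of `V`.
-/

open Matrix Finset

theorem Pi.single_one_left_inj {ι R : Type*} [DecidableEq ι] [Zero R] [One R] [NeZero (1 : R)]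
    {a b : ι} : (Pi.single a 1 : ι → R) = Pi.single b 1 ↔ a = b := by
  refine ⟨fun h => ?_, fun h => h ▸ rfl⟩
  by_contra hab
  simpa [hab] using congrFun h a

theorem eq_pi_single_one_of_forall_eq_zero_or_eq_one {ι R : Type*} [DecidableEq ι] [Zero R] [One R]
    {f : ι → R} {a : ι} (h01 : ∀ k, f k = 0 ∨ f k = 1) (ha : f a = 1)
    (huniq : ∀ k, f k = 1 → k = a) :
    f = Pi.single a 1 := by
  funext k
  by_cases hk : k = a
  · simp [hk, ha]
  · rcases h01 k with h | h
    · simp [hk, h]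
    · exact absurd (huniq k h) hk

theorem mul_mul_diagonal_inv_eq_self {m n 𝕜 : Type*} [Fintype m] [Fintype n] [DecidableEq n]
    [Field 𝕜] {S : Matrix m m 𝕜} {U : Matrix m n 𝕜} {Λ : n → 𝕜} (hΛ : ∀ k, Λ k ≠ 0)
    (hU : Uᵀ * U = 1) (hS : S = U * diagonal Λ * Uᵀ) :
    S * U * diagonal (fun k => (Λ k)⁻¹) = U := by
  rw [hS, Matrix.mul_assoc _ Uᵀ, hU, Matrix.mul_one, Matrix.mul_assoc, diagonal_mul_diagonal]
  simp [mul_inv_cancel₀ (hΛ _)]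

theorem sum_mul_mul_transpose_eq {ι m n p R : Type*} [Fintype ι] [Fintype n] [Fintype p]
    [CommSemiring R] (A : Matrix m n R) (C : ι → Matrix n p R) :
    ∑ l, (A * C l) * (A * C l)ᵀ = A * (∑ l, C l * (C l)ᵀ) * Aᵀ := by
  simp only [transpose_mul, Matrix.mul_sum, Matrix.sum_mul, Matrix.mul_assoc]

theorem mul_row_eq_of_row_eq_pi_single {m n p R : Type*} [Fintype n] [DecidableEq n]
    [NonAssocSemiring R] {Z : Matrix m n R} {i : m} {k : n} (hZ : Z i = Pi.single k 1)
    (Q : Matrix n p R) :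
    (Z * Q) i = Q k := by
  rw [mul_apply_eq_vecMul, hZ, single_one_vecMul]
  rfl

theorem transpose_mul_diagonal_mul_eq_diagonal {m n R : Type*} [Fintype m] [Fintype n]
    [DecidableEq m] [DecidableEq n] [CommSemiring R] {Z : Matrix m n R} {c : m → n}
    (hZ : ∀ i, Z i = Pi.single (c i) 1) (w : m → R) :
    Zᵀ * diagonal w * Z = diagonal fun k => ∑ i with c i = k, w i := by
  ext a b
  simp only [mul_apply, transpose_apply, diagonal_apply, hZ, Pi.single_apply, mul_ite, mul_one,
    mul_zero, ite_mul, zero_mul, one_mul, sum_ite_eq', mem_univ, if_true]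
  rw [sum_filter]
  split_ifs with hab
  · subst hab
    exact sum_congr rfl fun i _ => by split_ifs <;> simp_all
  · exact sum_eq_zero fun i _ => by split_ifs <;> simp_all

theorem mul_transpose_eq_one_of_transpose_mul_diagonal_mul_eq_one {n : Type*} [Fintype n]
    [DecidableEq n] {Q : Matrix n n ℝ} {δ : n → ℝ} (hδ : ∀ k, 0 ≤ δ k)
    (hQ : Qᵀ * diagonal δ * Q = 1) :
    (diagonal (fun k => √(δ k)) * Q) * (diagonal (fun k => √(δ k)) * Q)ᵀ = 1 := by
  refine mul_eq_one_comm.mp ?_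
  rw [transpose_mul, diagonal_transpose, Matrix.mul_assoc, ← Matrix.mul_assoc (diagonal _),
    diagonal_mul_diagonal, ← Matrix.mul_assoc, ← hQ]
  congr 3
  funext k
  exact Real.mul_self_sqrt (hδ k)

theorem dotProduct_rows_of_mul_transpose_eq_one {m n R : Type*} [Fintype n] [DecidableEq m]
    [CommSemiring R] {V : Matrix m n R} (hV : V * Vᵀ = 1) (a b : m) :
    V a ⬝ᵥ V b = if a = b then 1 else 0 := by
  simpa [mul_apply, one_apply, dotProduct] using congrFun (congrFun hV a) b

theorem sum_sq_sub_rows_eq_two {m n : Type*} [Fintype n] [DecidableEq m]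
    {V : Matrix m n ℝ} (hV : V * Vᵀ = 1) {a b : m} (hab : a ≠ b) :
    ∑ k, (V a k - V b k) ^ 2 = 2 := by
  have h := dotProduct_rows_of_mul_transpose_eq_one hV
  have hexpand : ∑ k, (V a k - V b k) ^ 2 = V a ⬝ᵥ V a + V b ⬝ᵥ V b - 2 * V a ⬝ᵥ V b := by
    simp only [dotProduct, mul_sum, ← sum_add_distrib, ← sum_sub_distrib]
    exact sum_congr rfl fun k _ => by ring
  rw [hexpand, h, h, h, if_pos rfl, if_pos rfl, if_neg hab]
  norm_num

theorem injective_of_mul_transpose_eq_one {m n : Type*} [Fintype n] [DecidableEq m]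
    {V : Matrix m n ℝ} (hV : V * Vᵀ = 1) : Function.Injective V := by
  intro a b h
  by_contra hab
  simpa [h] using sum_sq_sub_rows_eq_two hV hab

theorem mul_div_sqrt_sum_sq_mul {n : Type*} [Fintype n] {v : n → ℝ} (hv : v ⬝ᵥ v = 1) {a : ℝ}
    (ha : 0 < a) (k : n) :
    a * v k / √(∑ k', (a * v k') ^ 2) = v k := by
  have hsum : ∑ k', (a * v k') ^ 2 = a ^ 2 * (v ⬝ᵥ v) := by
    simp only [dotProduct, mul_sum]
    exact sum_congr rfl fun _ _ => by ring
  rw [hsum, hv, mul_one, Real.sqrt_sq ha.le]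
  field_simp

theorem exists_mul_transpose_eq_one_row_normalize_eq {m K : Type*} [Fintype m] [Fintype K]
    [DecidableEq m] [DecidableEq K] {Z : Matrix m K ℝ} {c : m → K}
    (hZ : ∀ i, Z i = Pi.single (c i) 1) (hc : Function.Surjective c) {θ : m → ℝ}
    (hθ : ∀ i, 0 < θ i) {U : Matrix m K ℝ} {Q : Matrix K K ℝ} (hUQ : U = diagonal θ * Z * Q)
    (hU : Uᵀ * U = 1) :
    ∃ V : Matrix K K ℝ, V * Vᵀ = 1 ∧ ∀ i k, U i k / √(∑ k', U i k' ^ 2) = V (c i) k := by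
  set δ : K → ℝ := fun k => ∑ i with c i = k, θ i * θ i
  have hδ : ∀ k, 0 < δ k := fun k => by
    obtain ⟨i, rfl⟩ := hc k
    exact sum_pos' (fun j _ => mul_self_nonneg _) ⟨i, by simp, mul_pos (hθ i) (hθ i)⟩
  have hgram : Qᵀ * diagonal δ * Q = 1 := by
    rw [← hU, hUQ, ← transpose_mul_diagonal_mul_eq_diagonal hZ, ← diagonal_mul_diagonal]
    simp only [transpose_mul, diagonal_transpose, Matrix.mul_assoc]
  set V := diagonal (fun k => √(δ k)) * Q with hVdef
  have hV : V * Vᵀ = 1 := mul_transpose_eq_one_of_transpose_mul_diagonal_mul_eq_one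
    (fun k => (hδ k).le) hgram
  refine ⟨V, hV, fun i k => ?_⟩
  have hrow : ∀ k, U i k = θ i / √(δ (c i)) * V (c i) k := fun k => by
    have hs : √(δ (c i)) ≠ 0 := (Real.sqrt_pos.2 (hδ _)).ne'
    rw [hUQ, Matrix.mul_assoc, diagonal_mul, mul_row_eq_of_row_eq_pi_single (hZ i), hVdef,
      diagonal_mul]
    field_simp
  simp only [hrow]
  refine mul_div_sqrt_sum_sq_mul ?_ (div_pos (hθ i) (Real.sqrt_pos.2 (hδ _))) k
  simpa using dotProduct_rows_of_mul_transpose_eq_one hV (c i) (c i)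

theorem stmt1_general
    (nr nc Kr Kc L : ℕ)
    (Zr : Matrix (Fin nr) (Fin Kr) ℝ) (Zc : Matrix (Fin nc) (Fin Kc) ℝ)
    (hZr01 : ∀ i k, Zr i k = 0 ∨ Zr i k = 1)
    (hZrrow : ∀ i, ∃! k, Zr i k = 1)
    (hZrcol : ∀ k, ∃ i, Zr i k = 1)
    (θr : Fin nr → ℝ) (θc : Fin nc → ℝ)
    (hθr : ∀ i, 0 < θr i ∧ θr i ≤ 1)
    (B : Fin L → Matrix (Fin Kr) (Fin Kc) ℝ)
    (Ωm : Fin L → Matrix (Fin nr) (Fin nc) ℝ)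
    (hΩm : ∀ l, Ωm l = Matrix.diagonal θr * Zr * B l * (Zc)ᵀ * Matrix.diagonal θc)
    (Str : Matrix (Fin nr) (Fin nr) ℝ)
    (hStr : Str = ∑ l, Ωm l * (Ωm l)ᵀ)
    (Ur : Matrix (Fin nr) (Fin Kr) ℝ) (Λr : Fin Kr → ℝ)
    (hΛ : ∀ k, Λr k ≠ 0)
    (hUorth : (Ur)ᵀ * Ur = 1)
    (hdecomp : Str = Ur * Matrix.diagonal Λr * (Ur)ᵀ)
    (Ustar : Matrix (Fin nr) (Fin Kr) ℝ)
    (hUstar : ∀ i k, Ustar i k = Ur i k / Real.sqrt (∑ k', (Ur i k') ^ 2)) :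
    ∀ i i₂ : Fin nr,
      (Ustar i = Ustar i₂ ↔ Zr i = Zr i₂) ∧
      (Zr i ≠ Zr i₂ →
        Real.sqrt (∑ k, (Ustar i k - Ustar i₂ k) ^ 2) = Real.sqrt 2) := by
  choose c hc hcu using hZrrow
  have hZ : ∀ i, Zr i = Pi.single (c i) 1 := fun i =>
    eq_pi_single_one_of_forall_eq_zero_or_eq_one (hZr01 i) (hc i) (hcu i)
  have hsurj : Function.Surjective c := fun k =>
    let ⟨i, hi⟩ := hZrcol k
    ⟨i, (hcu i k hi).symm⟩
  set A := diagonal θr * Zr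
  set N := ∑ l, (B l * Zcᵀ * diagonal θc) * (B l * Zcᵀ * diagonal θc)ᵀ
  have hStrN : Str = A * N * Aᵀ := by
    have hΩA : ∀ l, Ωm l = A * (B l * Zcᵀ * diagonal θc) := fun l => by
      simp only [hΩm, A, Matrix.mul_assoc]
    rw [hStr, funext hΩA, sum_mul_mul_transpose_eq]
  have hUQ : Ur = A * (N * Aᵀ * Ur * diagonal fun k => (Λr k)⁻¹) := by
    conv_lhs => rw [← mul_mul_diagonal_inv_eq_self hΛ hUorth hdecomp, hStrN]
    simp only [Matrix.mul_assoc]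
  obtain ⟨V, hV, hUV⟩ := exists_mul_transpose_eq_one_row_normalize_eq hZ hsurj
    (fun i => (hθr i).1) hUQ hUorth
  have hUstarV : ∀ i, Ustar i = V (c i) := fun i => funext fun k => (hUstar i k).trans (hUV i k)
  intro i i₂
  rw [hUstarV, hUstarV, hZ, hZ, ne_eq, (injective_of_mul_transpose_eq_one hV).eq_iff,
    Pi.single_one_left_inj]
  exact ⟨Iff.rfl, fun hne => by rw [sum_sq_sub_rows_eq_two hV hne]⟩

/-- Lemma 1 of the paper, row part, full-rank case.
If `∑ l, B l (B l)ᵀ` has full rank `K_r` and `S̃_r = U_r Λ_r U_rᵀ` with `U_r` having orthonormal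
columns, `Λ_r` diagonal with nonzero diagonal entries, and all rows of `U_r` nonzero, then the
row-normalized matrix `U_r*` satisfies: `U_r*(i,:) = U_r*(i₂,:)` iff `Z_r(i,:) = Z_r(i₂,:)`,
and rows of distinct communities are at Euclidean distance `√2`. -/
theorem stmt1
    (nr nc Kr Kc L : ℕ)
    (hnr : 0 < nr) (hnc : 0 < nc) (hKr : 0 < Kr) (hKc : 0 < Kc) (hL : 0 < L)
    (Zr : Matrix (Fin nr) (Fin Kr) ℝ) (Zc : Matrix (Fin nc) (Fin Kc) ℝ)
    (hZr01 : ∀ i k, Zr i k = 0 ∨ Zr i k = 1)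
    (hZrrow : ∀ i, ∃! k, Zr i k = 1)
    (hZrcol : ∀ k, ∃ i, Zr i k = 1)
    (hZc01 : ∀ j k, Zc j k = 0 ∨ Zc j k = 1)
    (hZcrow : ∀ j, ∃! k, Zc j k = 1)
    (hZccol : ∀ k, ∃ j, Zc j k = 1)
    (θr : Fin nr → ℝ) (θc : Fin nc → ℝ)
    (hθr : ∀ i, 0 < θr i ∧ θr i ≤ 1) (hθc : ∀ j, 0 < θc j ∧ θc j ≤ 1)
    (B : Fin L → Matrix (Fin Kr) (Fin Kc) ℝ)
    (hB01 : ∀ l k k', 0 ≤ B l k k' ∧ B l k k' ≤ 1)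
    (Ωm : Fin L → Matrix (Fin nr) (Fin nc) ℝ)
    (hΩm : ∀ l, Ωm l = Matrix.diagonal θr * Zr * B l * (Zc)ᵀ * Matrix.diagonal θc)
    (Str : Matrix (Fin nr) (Fin nr) ℝ)
    (hStr : Str = ∑ l, Ωm l * (Ωm l)ᵀ)
    (hrank : (∑ l, B l * (B l)ᵀ).rank = Kr)
    (Ur : Matrix (Fin nr) (Fin Kr) ℝ) (Λr : Fin Kr → ℝ)
    (hΛ : ∀ k, Λr k ≠ 0)
    (hUorth : (Ur)ᵀ * Ur = 1)
    (hdecomp : Str = Ur * Matrix.diagonal Λr * (Ur)ᵀ)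
    (hrows : ∀ i, Ur i ≠ 0)
    (Ustar : Matrix (Fin nr) (Fin Kr) ℝ)
    (hUstar : ∀ i k, Ustar i k = Ur i k / Real.sqrt (∑ k', (Ur i k') ^ 2)) :
    ∀ i i₂ : Fin nr,
      (Ustar i = Ustar i₂ ↔ Zr i = Zr i₂) ∧
      (Zr i ≠ Zr i₂ →
        Real.sqrt (∑ k, (Ustar i k - Ustar i₂ k) ^ 2) = Real.sqrt 2) :=
  stmt1_general nr nc Kr Kc L Zr Zc hZr01 hZrrow hZrcol θr θc hθr B Ωm hΩm Str hStr Ur Λr hΛ hUorth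
    hdecomp Ustar hUstar
end

section
/- Let K̃ = rank(Σ_{l=1}^L B_l^T B_l) with K̃ ≤ K_c, and let U_c be an n_c × K̃ real matrix with orthonormal columns and Λ_c a K̃ × K̃ diagonal matrix with nonzero diagonal entries such that S̃_c = U_c Λ_c U_c^T. Then there exists a K_c × K̃ real matrix X_c such that U_c = Θ_c Z_c X_c. In particular, if all rows of U_c are nonzero and U_c*(j,:) = U_c(j,:)/‖U_c(j,:)‖ denotes the row-normalized matrix, then Z_c(j,:) = Z_c(j̃,:) implies U_c*(j,:) = U_c*(j̃,:) for all j, j̃ ∈ [n_c]. -/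
open Matrix Finset

lemma stmt2_aux_norm {n : ℕ} (c : ℝ) (hc : 0 < c) (v : Fin n → ℝ) (k : Fin n) :
    c * v k / Real.sqrt (∑ k', (c * v k') ^ 2) = v k / Real.sqrt (∑ k', (v k') ^ 2) := by
  have h : ∑ k', (c * v k') ^ 2 = c ^ 2 * ∑ k', (v k') ^ 2 := by
    rw [Finset.mul_sum]; exact Finset.sum_congr rfl fun k' _ => by ring
  rw [h, Real.sqrt_mul (sq_nonneg c), Real.sqrt_sq hc.le,
    mul_div_mul_left _ _ hc.ne']

/-- part of Lemma 1 of the paper, column part, existence of `X_c`.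
Under the multi-layer DC-ScBM parameterization, if `S̃_c = U_c Λ_c U_cᵀ` with `U_c` having
orthonormal columns and `Λ_c` diagonal with nonzero diagonal, where
`K̃ = rank (∑ l, (B l)ᵀ * B l) ≤ K_c`, then `U_c = Θ_c Z_c X_c` for some `X_c`, and hence
(if all rows of `U_c` are nonzero) column nodes in the same community have equal normalized
rows. -/
theorem stmt2
    (nr nc Kr Kc L Kt : ℕ)
    (hnr : 0 < nr) (hnc : 0 < nc) (hKr : 0 < Kr) (hKc : 0 < Kc) (hL : 0 < L)
    (Zr : Matrix (Fin nr) (Fin Kr) ℝ) (Zc : Matrix (Fin nc) (Fin Kc) ℝ)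
    (hZr01 : ∀ i k, Zr i k = 0 ∨ Zr i k = 1)
    (hZrrow : ∀ i, ∃! k, Zr i k = 1)
    (hZrcol : ∀ k, ∃ i, Zr i k = 1)
    (hZc01 : ∀ j k, Zc j k = 0 ∨ Zc j k = 1)
    (hZcrow : ∀ j, ∃! k, Zc j k = 1)
    (hZccol : ∀ k, ∃ j, Zc j k = 1)
    (θr : Fin nr → ℝ) (θc : Fin nc → ℝ)
    (hθr : ∀ i, 0 < θr i ∧ θr i ≤ 1) (hθc : ∀ j, 0 < θc j ∧ θc j ≤ 1)
    (B : Fin L → Matrix (Fin Kr) (Fin Kc) ℝ)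
    (hB01 : ∀ l k k', 0 ≤ B l k k' ∧ B l k k' ≤ 1)
    (Ωm : Fin L → Matrix (Fin nr) (Fin nc) ℝ)
    (hΩm : ∀ l, Ωm l = Matrix.diagonal θr * Zr * B l * (Zc)ᵀ * Matrix.diagonal θc)
    (Stc : Matrix (Fin nc) (Fin nc) ℝ)
    (hStc : Stc = ∑ l, (Ωm l)ᵀ * Ωm l)
    (hKt : Kt = (∑ l, (B l)ᵀ * B l).rank) (hKtle : Kt ≤ Kc)
    (Uc : Matrix (Fin nc) (Fin Kt) ℝ) (Λc : Fin Kt → ℝ)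
    (hΛ : ∀ k, Λc k ≠ 0)
    (hUorth : (Uc)ᵀ * Uc = 1)
    (hdecomp : Stc = Uc * Matrix.diagonal Λc * (Uc)ᵀ) :
    (∃ X : Matrix (Fin Kc) (Fin Kt) ℝ, Uc = Matrix.diagonal θc * Zc * X) ∧
    ((∀ j, Uc j ≠ 0) → ∀ j j₂, Zc j = Zc j₂ →
      (fun k => Uc j k / Real.sqrt (∑ k', (Uc j k') ^ 2)) =
      (fun k => Uc j₂ k / Real.sqrt (∑ k', (Uc j₂ k') ^ 2))) := by
  have hX : ∃ X : Matrix (Fin Kc) (Fin Kt) ℝ, Uc = Matrix.diagonal θc * Zc * X := by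
    set Dr := Matrix.diagonal θr with hDr
    set Dc := Matrix.diagonal θc with hDc
    set S' := ∑ l, ((B l)ᵀ * Zrᵀ * Dr) * (Dr * Zr * B l * Zcᵀ * Dc) with hS'
    refine ⟨S' * Uc * Matrix.diagonal (fun k => (Λc k)⁻¹), ?_⟩
    have hfac : Stc = Dc * Zc * S' := by
      rw [hStc, hS', Matrix.mul_sum]
      refine Finset.sum_congr rfl fun l _ => ?_
      rw [hΩm l]
      simp [Matrix.transpose_mul, Matrix.diagonal_transpose, Matrix.mul_assoc, hDr, hDc]
    have h1 : Stc * Uc = Uc * Matrix.diagonal Λc := by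
      rw [hdecomp, Matrix.mul_assoc, hUorth, Matrix.mul_one]
    calc Uc = Uc * Matrix.diagonal Λc * Matrix.diagonal (fun k => (Λc k)⁻¹) := by
            rw [Matrix.mul_assoc, Matrix.diagonal_mul_diagonal]
            have h2 : (fun i => Λc i * (Λc i)⁻¹) = (fun _ => (1:ℝ)) := funext fun k => mul_inv_cancel₀ (hΛ k)
            rw [h2, Matrix.diagonal_one, Matrix.mul_one]
      _ = Stc * Uc * Matrix.diagonal (fun k => (Λc k)⁻¹) := by rw [h1]
      _ = Dc * Zc * (S' * Uc * Matrix.diagonal (fun k => (Λc k)⁻¹)) := by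
            rw [hfac]; simp [Matrix.mul_assoc]
  refine ⟨hX, ?_⟩
  intro _ j j₂ hZ
  obtain ⟨X, hU⟩ := hX
  have hU' : ∀ j k, Uc j k = θc j * ((Zc * X) j k) := by
    intro j k
    rw [hU, Matrix.mul_assoc]
    simp [Matrix.mul_apply, Matrix.diagonal_apply]
  have hv : (Zc * X) j = (Zc * X) j₂ := by
    funext k
    simp [Matrix.mul_apply, hZ]
  funext k
  simp only [hU', hv]
  rw [stmt2_aux_norm (θc j) (hθc j).1, stmt2_aux_norm (θc j₂) (hθc j₂).1]
end

section
/- Suppose Σ_{l=1}^L B_l^T B_l has full rank K_c. Let U_c be an n_c × K_c real matrix with orthonormal columns and Λ_c a K_c × K_c diagonal matrix with nonzero diagonal entries such that S̃_c = U_c Λ_c U_c^T, and suppose every row of U_c is nonzero. Let U_c* be the matrix obtained from U_c by normalizing each row to unit Euclidean length. Then for all j, j̃ ∈ [n_c]: U_c*(j,:) = U_c*(j̃,:) if and only if Z_c(j,:) = Z_c(j̃,:); moreover, whenever Z_c(j,:) ≠ Z_c(j̃,:) one has ‖U_c*(j,:) − U_c*(j̃,:)‖ = √2. -/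
/-!
Write `U_c = Θ_c Z_c W` with `W` a square `K_c × K_c` matrix: this holds because
`U_c = S̃_c U_c Λ_c⁻¹` and `S̃_c = Θ_c Z_c N` for some `N`. Then
`I = U_cᵀ U_c = Wᵀ D W` with `D = Z_cᵀ Θ_c² Z_c` diagonal, so `W` is invertible and
`D W Wᵀ = I`: the rows of `W` are nonzero and pairwise orthogonal. Row `j` of `U_c` is
`θ_c(j) W(g j,:)` with `g j` the community of `j` and `θ_c(j) > 0`, so row `j` of `U_c*` is the
normalized row `g j` of `W`. These normalized rows are orthonormal, which gives both claims.
-/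

open Matrix Finset

theorem eq_single_of_forall_eq_zero_or_eq_one {ι R : Type*} [DecidableEq ι] [Zero R] [One R]
    {z : ι → R} {i : ι} (h01 : ∀ k, z k = 0 ∨ z k = 1) (hi : z i = 1)
    (huniq : ∀ k, z k = 1 → k = i) : z = Pi.single i 1 := by
  funext k
  by_cases hk : k = i
  · subst hk; simp [hi]
  · rcases h01 k with h | h
    · simp [h, hk]
    · exact absurd (huniq k h) hk

theorem Pi.single_left_inj {ι R : Type*} [DecidableEq ι] [Zero R] {b : R} (hb : b ≠ 0)
    {i i' : ι} : (Pi.single i b : ι → R) = Pi.single i' b ↔ i = i' :=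
  ⟨fun h => by simpa [Pi.single_apply, hb] using congrFun h i, fun h => h ▸ rfl⟩

section MatrixLemmas

variable {ι m n p K : Type*}

theorem eq_mul_of_mul_diagonal_mul_transpose_eq_mul [Field K] [Fintype m] [Fintype n]
    [Fintype p] [DecidableEq n] {U : Matrix m n K} {Λ : n → K} {A : Matrix m p K}
    {N : Matrix p m K} (hU : Uᵀ * U = 1) (hΛ : ∀ k, Λ k ≠ 0)
    (hS : U * diagonal Λ * Uᵀ = A * N) :
    U = A * (N * U * diagonal Λ⁻¹) := by
  have hΛinv : diagonal Λ * diagonal Λ⁻¹ = 1 := by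
    rw [diagonal_mul_diagonal, ← diagonal_one]
    exact congrArg diagonal (funext fun k => mul_inv_cancel₀ (hΛ k))
  calc U = U * diagonal Λ * (Uᵀ * U) * diagonal Λ⁻¹ := by
        rw [hU, Matrix.mul_one, Matrix.mul_assoc, hΛinv, Matrix.mul_one]
    _ = A * (N * U * diagonal Λ⁻¹) := by
        rw [← Matrix.mul_assoc, hS]; simp only [Matrix.mul_assoc]

theorem sum_transpose_mul_self_eq_diagonal_mul [CommSemiring K] [Fintype ι] [Fintype m]
    [Fintype n] [Fintype p] [DecidableEq n] (X : ι → Matrix m p K) (Z : Matrix n p K)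
    (θ : n → K) :
    ∑ l, (X l * Zᵀ * diagonal θ)ᵀ * (X l * Zᵀ * diagonal θ)
      = diagonal θ * Z * ∑ l, (X l)ᵀ * (X l * Zᵀ * diagonal θ) := by
  rw [Matrix.mul_sum]
  refine Finset.sum_congr rfl fun l _ => ?_
  simp only [transpose_mul, diagonal_transpose, transpose_transpose, Matrix.mul_assoc]

theorem diagonal_mul_mul_apply_of_row_eq_single [CommSemiring K] [Fintype n] [Fintype p]
    [DecidableEq n] [DecidableEq p] {Z : Matrix n p K} {g : n → p}
    (hZ : ∀ j, Z j = Pi.single (g j) 1) (θ : n → K) (W : Matrix p m K) (j : n) :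
    (diagonal θ * Z * W) j = θ j • W (g j) := by
  ext k
  rw [Matrix.mul_assoc, diagonal_mul, mul_apply, hZ]
  simp [Pi.single_apply]

theorem transpose_mul_self_diagonal_mul_of_row_eq_single [CommSemiring K] [Fintype n]
    [DecidableEq n] [DecidableEq p] {Z : Matrix n p K} {g : n → p}
    (hZ : ∀ j, Z j = Pi.single (g j) 1) (θ : n → K) :
    (diagonal θ * Z)ᵀ * (diagonal θ * Z) = diagonal fun k => ∑ j with g j = k, θ j ^ 2 := by
  ext k k'
  rw [Matrix.mul_apply, diagonal_apply, Finset.sum_filter]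
  simp only [transpose_apply, diagonal_mul, hZ, Pi.single_apply]
  by_cases hk : k = k'
  · subst hk
    rw [if_pos rfl]
    refine Finset.sum_congr rfl fun j _ => ?_
    split_ifs <;> simp_all [sq]
  · rw [if_neg hk]
    refine Finset.sum_eq_zero fun j _ => ?_
    split_ifs <;> simp_all

theorem mul_dotProduct_eq_ite_of_transpose_mul_diagonal_mul_eq_one [CommRing K] [Fintype n]
    [DecidableEq n] {W : Matrix n n K} {d : n → K} (h : Wᵀ * diagonal d * W = 1) (k k' : n) :
    d k * (W k ⬝ᵥ W k') = if k = k' then 1 else 0 := by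
  have h' : diagonal d * (W * Wᵀ) = 1 := by
    rw [← Matrix.mul_assoc]; exact mul_eq_one_comm.mp (by rwa [← Matrix.mul_assoc])
  simpa [diagonal_mul, mul_apply', one_apply] using congrFun₂ h' k k'

end MatrixLemmas

section Normalize

variable {ι n : Type*} [Fintype n]

noncomputable def normalizeVec (v : n → ℝ) : n → ℝ := (√(v ⬝ᵥ v))⁻¹ • v

theorem normalizeVec_smul_of_pos {c : ℝ} (hc : 0 < c) (v : n → ℝ) :
    normalizeVec (c • v) = normalizeVec v := by
  have hsqrt : √((c • v) ⬝ᵥ (c • v)) = c * √(v ⬝ᵥ v) := by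
    rw [smul_dotProduct, dotProduct_smul, smul_eq_mul, smul_eq_mul, ← mul_assoc,
      Real.sqrt_mul (mul_self_nonneg c), Real.sqrt_mul_self hc.le]
  rw [normalizeVec, normalizeVec, hsqrt, smul_smul, mul_inv, mul_right_comm,
    inv_mul_cancel₀ hc.ne', one_mul]

theorem normalizeVec_dotProduct_normalizeVec (u v : n → ℝ) :
    normalizeVec u ⬝ᵥ normalizeVec v = (√(u ⬝ᵥ u))⁻¹ * (√(v ⬝ᵥ v))⁻¹ * (u ⬝ᵥ v) := by
  simp only [normalizeVec, smul_dotProduct, dotProduct_smul, smul_eq_mul]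
  ring

theorem normalizeVec_dotProduct_self {v : n → ℝ} (hv : v ≠ 0) :
    normalizeVec v ⬝ᵥ normalizeVec v = 1 := by
  have hnonneg : 0 ≤ v ⬝ᵥ v := Finset.sum_nonneg fun k _ => mul_self_nonneg (v k)
  rw [normalizeVec_dotProduct_normalizeVec, ← mul_inv, Real.mul_self_sqrt hnonneg,
    inv_mul_cancel₀ (dotProduct_self_eq_zero.not.mpr hv)]

theorem normalizeVec_dotProduct_eq_ite_of_mul_dotProduct_eq_ite [DecidableEq ι]
    {w : ι → n → ℝ} {d : ι → ℝ} (hw : ∀ i i', d i * (w i ⬝ᵥ w i') = if i = i' then 1 else 0)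
    (i i' : ι) : normalizeVec (w i) ⬝ᵥ normalizeVec (w i') = if i = i' then 1 else 0 := by
  have hii : d i * (w i ⬝ᵥ w i) = 1 := by simpa using hw i i
  split_ifs with h
  · subst h
    exact normalizeVec_dotProduct_self fun h0 => by simp [h0] at hii
  · have horth : w i ⬝ᵥ w i' = 0 := by
      simpa [h, left_ne_zero_of_mul_eq_one hii] using hw i i'
    rw [normalizeVec_dotProduct_normalizeVec, horth, mul_zero]

variable [DecidableEq ι] {v : ι → n → ℝ}

theorem eq_iff_of_dotProduct_eq_ite (hv : ∀ i i', v i ⬝ᵥ v i' = if i = i' then 1 else 0)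
    (i i' : ι) : v i = v i' ↔ i = i' := by
  refine ⟨fun h => by_contra fun hne => ?_, fun h => h ▸ rfl⟩
  have := hv i i'
  rw [h, hv i' i', if_pos rfl, if_neg hne] at this
  exact one_ne_zero this

theorem sum_sub_sq_eq_two_of_dotProduct_eq_ite
    (hv : ∀ i i', v i ⬝ᵥ v i' = if i = i' then 1 else 0) {i i' : ι} (hne : i ≠ i') :
    ∑ k, (v i k - v i' k) ^ 2 = 2 := by
  have hexpand : ∑ k, (v i k - v i' k) ^ 2 = v i ⬝ᵥ v i + v i' ⬝ᵥ v i' - 2 * (v i ⬝ᵥ v i') := by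
    simp only [dotProduct, Finset.mul_sum, ← Finset.sum_add_distrib, ← Finset.sum_sub_distrib]
    exact Finset.sum_congr rfl fun k _ => by ring
  rw [hexpand, hv, hv, hv, if_pos rfl, if_pos rfl, if_neg hne]
  norm_num

end Normalize

theorem stmt3_general
    (nr nc Kr Kc L : ℕ)
    (Zr : Matrix (Fin nr) (Fin Kr) ℝ) (Zc : Matrix (Fin nc) (Fin Kc) ℝ)
    (hZc01 : ∀ j k, Zc j k = 0 ∨ Zc j k = 1)
    (hZcrow : ∀ j, ∃! k, Zc j k = 1)
    (θr : Fin nr → ℝ) (θc : Fin nc → ℝ)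
    (hθc : ∀ j, 0 < θc j ∧ θc j ≤ 1)
    (B : Fin L → Matrix (Fin Kr) (Fin Kc) ℝ)
    (Ωm : Fin L → Matrix (Fin nr) (Fin nc) ℝ)
    (hΩm : ∀ l, Ωm l = Matrix.diagonal θr * Zr * B l * (Zc)ᵀ * Matrix.diagonal θc)
    (Stc : Matrix (Fin nc) (Fin nc) ℝ)
    (hStc : Stc = ∑ l, (Ωm l)ᵀ * Ωm l)
    (Uc : Matrix (Fin nc) (Fin Kc) ℝ) (Λc : Fin Kc → ℝ)
    (hΛ : ∀ k, Λc k ≠ 0)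
    (hUorth : (Uc)ᵀ * Uc = 1)
    (hdecomp : Stc = Uc * Matrix.diagonal Λc * (Uc)ᵀ)
    (Ustar : Matrix (Fin nc) (Fin Kc) ℝ)
    (hUstar : ∀ j k, Ustar j k = Uc j k / Real.sqrt (∑ k', (Uc j k') ^ 2)) :
    ∀ j j₂ : Fin nc,
      (Ustar j = Ustar j₂ ↔ Zc j = Zc j₂) ∧
      (Zc j ≠ Zc j₂ →
        Real.sqrt (∑ k, (Ustar j k - Ustar j₂ k) ^ 2) = Real.sqrt 2) := by
  choose g hg hg_uniq using hZcrow
  have hZ : ∀ j, Zc j = Pi.single (g j) 1 := fun j =>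
    eq_single_of_forall_eq_zero_or_eq_one (hZc01 j) (hg j) (hg_uniq j)
  have hS : Uc * diagonal Λc * Ucᵀ
      = diagonal θc * Zc * ∑ l, (diagonal θr * Zr * B l)ᵀ * Ωm l := by
    rw [← hdecomp, hStc]
    simp only [hΩm]
    exact sum_transpose_mul_self_eq_diagonal_mul _ _ _
  obtain ⟨W, hW⟩ : ∃ W : Matrix (Fin Kc) (Fin Kc) ℝ, Uc = diagonal θc * Zc * W :=
    ⟨_, eq_mul_of_mul_diagonal_mul_transpose_eq_mul hUorth hΛ hS⟩
  have hgram : Wᵀ * diagonal (fun k => ∑ j with g j = k, θc j ^ 2) * W = 1 := by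
    rw [← hUorth, hW, transpose_mul, ← transpose_mul_self_diagonal_mul_of_row_eq_single hZ]
    simp only [Matrix.mul_assoc]
  have horthonormal := normalizeVec_dotProduct_eq_ite_of_mul_dotProduct_eq_ite
    (mul_dotProduct_eq_ite_of_transpose_mul_diagonal_mul_eq_one hgram)
  have hUstar_row : ∀ j, Ustar j = normalizeVec (W (g j)) := fun j => by
    rw [← normalizeVec_smul_of_pos (hθc j).1, ← diagonal_mul_mul_apply_of_row_eq_single hZ, ← hW]
    ext k
    simp [hUstar, normalizeVec, dotProduct, sq, div_eq_inv_mul]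
  intro j j₂
  rw [hUstar_row, hUstar_row, hZ, hZ, ne_eq, Pi.single_left_inj (one_ne_zero : (1 : ℝ) ≠ 0),
    eq_iff_of_dotProduct_eq_ite horthonormal]
  exact ⟨Iff.rfl, fun hne => by rw [sum_sub_sq_eq_two_of_dotProduct_eq_ite horthonormal hne]⟩

/-- Lemma 1 of the paper, column part, full-rank case.
If `∑ l, (B l)ᵀ * B l` has full rank `K_c` and `S̃_c = U_c Λ_c U_cᵀ` with `U_c` having
orthonormal columns, `Λ_c` diagonal with nonzero diagonal entries, and all rows of `U_c`
nonzero, then the row-normalized matrix `U_c*` satisfies: `U_c*(j,:) = U_c*(j₂,:)` iff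
`Z_c(j,:) = Z_c(j₂,:)`, and rows of distinct communities are at Euclidean distance `√2`. -/
theorem stmt3
    (nr nc Kr Kc L : ℕ)
    (hnr : 0 < nr) (hnc : 0 < nc) (hKr : 0 < Kr) (hKc : 0 < Kc) (hL : 0 < L)
    (Zr : Matrix (Fin nr) (Fin Kr) ℝ) (Zc : Matrix (Fin nc) (Fin Kc) ℝ)
    (hZr01 : ∀ i k, Zr i k = 0 ∨ Zr i k = 1)
    (hZrrow : ∀ i, ∃! k, Zr i k = 1)
    (hZrcol : ∀ k, ∃ i, Zr i k = 1)
    (hZc01 : ∀ j k, Zc j k = 0 ∨ Zc j k = 1)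
    (hZcrow : ∀ j, ∃! k, Zc j k = 1)
    (hZccol : ∀ k, ∃ j, Zc j k = 1)
    (θr : Fin nr → ℝ) (θc : Fin nc → ℝ)
    (hθr : ∀ i, 0 < θr i ∧ θr i ≤ 1) (hθc : ∀ j, 0 < θc j ∧ θc j ≤ 1)
    (B : Fin L → Matrix (Fin Kr) (Fin Kc) ℝ)
    (hB01 : ∀ l k k', 0 ≤ B l k k' ∧ B l k k' ≤ 1)
    (Ωm : Fin L → Matrix (Fin nr) (Fin nc) ℝ)
    (hΩm : ∀ l, Ωm l = Matrix.diagonal θr * Zr * B l * (Zc)ᵀ * Matrix.diagonal θc)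
    (Stc : Matrix (Fin nc) (Fin nc) ℝ)
    (hStc : Stc = ∑ l, (Ωm l)ᵀ * Ωm l)
    (hrank : (∑ l, (B l)ᵀ * B l).rank = Kc)
    (Uc : Matrix (Fin nc) (Fin Kc) ℝ) (Λc : Fin Kc → ℝ)
    (hΛ : ∀ k, Λc k ≠ 0)
    (hUorth : (Uc)ᵀ * Uc = 1)
    (hdecomp : Stc = Uc * Matrix.diagonal Λc * (Uc)ᵀ)
    (hrows : ∀ j, Uc j ≠ 0)
    (Ustar : Matrix (Fin nc) (Fin Kc) ℝ)
    (hUstar : ∀ j k, Ustar j k = Uc j k / Real.sqrt (∑ k', (Uc j k') ^ 2)) :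
    ∀ j j₂ : Fin nc,
      (Ustar j = Ustar j₂ ↔ Zc j = Zc j₂) ∧
      (Zc j ≠ Zc j₂ →
        Real.sqrt (∑ k, (Ustar j k - Ustar j₂ k) ^ 2) = Real.sqrt 2) :=
  stmt3_general nr nc Kr Kc L Zr Zc hZc01 hZcrow θr θc hθc B Ωm hΩm Stc hStc Uc Λc hΛ hUorth hdecomp
    Ustar hUstar
end

section
/- The expectation of the debiased matrix S_r satisfies: for all i ≠ j in [n_r], E[S_r(i,j)] = S̃_r(i,j), and for every i ∈ [n_r], E[S_r(i,i)] = S̃_r(i,i) − Σ_{l=1}^L Σ_{m=1}^{n_c} Ω_l(i,m)^2. Equivalently, E[S_r] = S̃_r − R2 where R2 is the n_r × n_r diagonal matrix with R2(i,i) = Σ_{l=1}^L Σ_{m=1}^{n_c} Ω_l(i,m)^2. -/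
open Matrix Finset MeasureTheory ProbabilityTheory

/-!
Expanding `S_r(i,j) = ∑_l ∑_m A_l(i,m) A_l(j,m) - [i = j] ∑_l ∑_m A_l(i,m)`: for `i ≠ j` the two
factors of each product are independent Bernoulli variables, so each term has mean
`Ω_l(i,m) Ω_l(j,m)`. On the diagonal `A_l(i,m)^2 = A_l(i,m)`, so `S_r(i,i)` vanishes identically,
while `S̃_r(i,i) = ∑_l ∑_m Ω_l(i,m)^2`.
-/

lemma Matrix.mul_apply_nonneg {m n p : Type*} [Fintype n] {M : Matrix m n ℝ} {N : Matrix n p ℝ}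
    (hM : ∀ i k, 0 ≤ M i k) (hN : ∀ k j, 0 ≤ N k j) (i : m) (j : p) : 0 ≤ (M * N) i j :=
  Finset.sum_nonneg fun k _ => mul_nonneg (hM i k) (hN k j)

lemma Matrix.diagonal_apply_nonneg {n : Type*} [DecidableEq n] {d : n → ℝ} (hd : ∀ i, 0 ≤ d i)
    (i j : n) : 0 ≤ diagonal d i j := by
  by_cases h : i = j
  · subst h; simpa using hd i
  · simp [h]

lemma Matrix.diagonal_mul_mul_mul_transpose_mul_diagonal_apply_nonneg {m n p q : Type*}
    [Fintype m] [Fintype n] [Fintype p] [Fintype q] [DecidableEq m] [DecidableEq n]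
    {θr : m → ℝ} {θc : n → ℝ} {Zr : Matrix m p ℝ} {Zc : Matrix n q ℝ} {B : Matrix p q ℝ}
    (hθr : ∀ i, 0 ≤ θr i) (hθc : ∀ j, 0 ≤ θc j) (hZr : ∀ i k, 0 ≤ Zr i k)
    (hZc : ∀ j k, 0 ≤ Zc j k) (hB : ∀ k k', 0 ≤ B k k') (i : m) (j : n) :
    0 ≤ (diagonal θr * Zr * B * Zcᵀ * diagonal θc) i j :=
  mul_apply_nonneg (mul_apply_nonneg (mul_apply_nonneg (mul_apply_nonneg
    (diagonal_apply_nonneg hθr) hZr) hB) fun k j => hZc j k) (diagonal_apply_nonneg hθc) i j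

lemma Matrix.mul_transpose_sub_diagonal_apply_self {m n : Type*} [Fintype n] [DecidableEq m]
    {M : Matrix m n ℝ} (hM : ∀ i k, M i k = 0 ∨ M i k = 1) (i : m) :
    (M * Mᵀ - diagonal fun i => ∑ k, M i k) i i = 0 := by
  simp only [sub_apply, mul_apply, transpose_apply, diagonal_apply_eq, sub_eq_zero]
  refine Finset.sum_congr rfl fun k _ => ?_
  rcases hM i k with h | h <;> simp [h]

lemma Matrix.mul_transpose_sub_diagonal_apply_of_ne {m n : Type*} [Fintype n] [DecidableEq m]
    (M : Matrix m n ℝ) {i j : m} (hij : i ≠ j) :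
    (M * Mᵀ - diagonal fun i => ∑ k, M i k) i j = ∑ k, M i k * M j k := by
  simp [mul_apply, diagonal_apply_ne _ hij]

lemma eq_indicator_of_zero_or_one {Ω : Type*} {X : Ω → ℝ} (hX : ∀ ω, X ω = 0 ∨ X ω = 1) :
    X = {ω | X ω = 1}.indicator 1 := by
  funext ω
  rcases hX ω with h | h <;> simp [h]

section ZeroOne

variable {Ω : Type*} [MeasurableSpace Ω] {μ : Measure Ω} {X : Ω → ℝ}

lemma integral_eq_measureReal_of_zero_or_one (hXm : Measurable X)
    (hX : ∀ ω, X ω = 0 ∨ X ω = 1) : ∫ ω, X ω ∂μ = μ.real {ω | X ω = 1} := by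
  conv_lhs => rw [eq_indicator_of_zero_or_one hX]
  exact integral_indicator_one (hXm (measurableSet_singleton 1))

lemma integrable_of_zero_or_one [IsFiniteMeasure μ] (hXm : Measurable X)
    (hX : ∀ ω, X ω = 0 ∨ X ω = 1) : Integrable X μ := by
  rw [eq_indicator_of_zero_or_one hX]
  exact (integrable_const 1).indicator (hXm (measurableSet_singleton 1))

end ZeroOne

theorem stmt5_general
    (nr nc Kr Kc L : ℕ)
    (Zr : Matrix (Fin nr) (Fin Kr) ℝ) (Zc : Matrix (Fin nc) (Fin Kc) ℝ)
    (hZr01 : ∀ i k, Zr i k = 0 ∨ Zr i k = 1)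
    (hZc01 : ∀ j k, Zc j k = 0 ∨ Zc j k = 1)
    (θr : Fin nr → ℝ) (θc : Fin nc → ℝ)
    (hθr : ∀ i, 0 < θr i ∧ θr i ≤ 1) (hθc : ∀ j, 0 < θc j ∧ θc j ≤ 1)
    (B : Fin L → Matrix (Fin Kr) (Fin Kc) ℝ)
    (hB01 : ∀ l k k', 0 ≤ B l k k' ∧ B l k k' ≤ 1)
    (Ωm : Fin L → Matrix (Fin nr) (Fin nc) ℝ)
    (hΩm : ∀ l, Ωm l = Matrix.diagonal θr * Zr * B l * (Zc)ᵀ * Matrix.diagonal θc)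
    (Str : Matrix (Fin nr) (Fin nr) ℝ)
    (hStr : Str = ∑ l, Ωm l * (Ωm l)ᵀ)
    -- the random adjacency matrices
    (Ω' : Type) [MeasurableSpace Ω'] (μ : Measure Ω') [IsProbabilityMeasure μ]
    (A : Fin L → Ω' → Matrix (Fin nr) (Fin nc) ℝ)
    (hA01 : ∀ l ω i j, A l ω i j = 0 ∨ A l ω i j = 1)
    (hAmeas : ∀ l i j, Measurable (fun ω => A l ω i j))
    (hABer : ∀ l i j, μ {ω | A l ω i j = 1} = ENNReal.ofReal (Ωm l i j))
    (hAindep : iIndepFun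
      (fun p : Fin L × Fin nr × Fin nc => fun ω => A p.1 ω p.2.1 p.2.2) μ)
    -- the debiased matrix `S_r`
    (Sr : Ω' → Matrix (Fin nr) (Fin nr) ℝ)
    (hSr : ∀ ω, Sr ω = ∑ l, (A l ω * (A l ω)ᵀ
      - Matrix.diagonal (fun i => ∑ j, A l ω i j))) :
    (∀ i j : Fin nr, i ≠ j → (∫ ω, Sr ω i j ∂μ) = Str i j) ∧
    (∀ i : Fin nr, (∫ ω, Sr ω i i ∂μ) = Str i i - ∑ l, ∑ m, (Ωm l i m) ^ 2) := by
  have hΩnonneg : ∀ l i m, 0 ≤ Ωm l i m := fun l i m => by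
    rw [hΩm]
    exact diagonal_mul_mul_mul_transpose_mul_diagonal_apply_nonneg (fun i => (hθr i).1.le)
      (fun j => (hθc j).1.le) (fun i k => (hZr01 i k).elim (·.ge) (· ▸ zero_le_one))
      (fun j k => (hZc01 j k).elim (·.ge) (· ▸ zero_le_one)) (fun k k' => (hB01 l k k').1) i m
  have hmean : ∀ l i m, ∫ ω, A l ω i m ∂μ = Ωm l i m := fun l i m => by
    rw [integral_eq_measureReal_of_zero_or_one (hAmeas l i m) (hA01 l · i m), measureReal_def,
      hABer, ENNReal.toReal_ofReal (hΩnonneg l i m)]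
  constructor
  · intro i j hij
    have hterm : ∀ l m, ∫ ω, A l ω i m * A l ω j m ∂μ = Ωm l i m * Ωm l j m := fun l m => by
      have hindep := hAindep.indepFun (i := (l, i, m)) (j := (l, j, m)) (by simp [hij])
      rw [hindep.integral_fun_mul_eq_mul_integral (hAmeas l i m).aestronglyMeasurable
        (hAmeas l j m).aestronglyMeasurable, hmean, hmean]
    have hint : ∀ l m, Integrable (fun ω => A l ω i m * A l ω j m) μ := fun l m =>
      integrable_of_zero_or_one ((hAmeas l i m).mul (hAmeas l j m)) fun ω => by
        rcases hA01 l ω i m with h | h <;> simp [h, hA01 l ω j m]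
    simp only [hSr, hStr, Matrix.sum_apply, mul_transpose_sub_diagonal_apply_of_ne _ hij]
    rw [integral_finsetSum _ fun l _ => integrable_finsetSum _ fun m _ => hint l m]
    refine Finset.sum_congr rfl fun l _ => ?_
    rw [integral_finsetSum _ fun m _ => hint l m]
    simp [mul_apply, hterm]
  · intro i
    simp [hSr, hStr, Matrix.sum_apply, mul_transpose_sub_diagonal_apply_self (hA01 _ _),
      mul_apply, sq]

/-- expectation of the debiased matrix `S_r`.
Under the multi-layer DC-ScBM, the off-diagonal entries of `E[S_r]` equal those of `S̃_r`,
and the diagonal entries satisfy `E[S_r(i,i)] = S̃_r(i,i) − ∑_l ∑_m Ω_l(i,m)²`. -/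
theorem stmt5
    (nr nc Kr Kc L : ℕ)
    (hnr : 0 < nr) (hnc : 0 < nc) (hKr : 0 < Kr) (hKc : 0 < Kc) (hL : 0 < L)
    (Zr : Matrix (Fin nr) (Fin Kr) ℝ) (Zc : Matrix (Fin nc) (Fin Kc) ℝ)
    (hZr01 : ∀ i k, Zr i k = 0 ∨ Zr i k = 1)
    (hZrrow : ∀ i, ∃! k, Zr i k = 1)
    (hZrcol : ∀ k, ∃ i, Zr i k = 1)
    (hZc01 : ∀ j k, Zc j k = 0 ∨ Zc j k = 1)
    (hZcrow : ∀ j, ∃! k, Zc j k = 1)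
    (hZccol : ∀ k, ∃ j, Zc j k = 1)
    (θr : Fin nr → ℝ) (θc : Fin nc → ℝ)
    (hθr : ∀ i, 0 < θr i ∧ θr i ≤ 1) (hθc : ∀ j, 0 < θc j ∧ θc j ≤ 1)
    (B : Fin L → Matrix (Fin Kr) (Fin Kc) ℝ)
    (hB01 : ∀ l k k', 0 ≤ B l k k' ∧ B l k k' ≤ 1)
    (Ωm : Fin L → Matrix (Fin nr) (Fin nc) ℝ)
    (hΩm : ∀ l, Ωm l = Matrix.diagonal θr * Zr * B l * (Zc)ᵀ * Matrix.diagonal θc)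
    (Str : Matrix (Fin nr) (Fin nr) ℝ)
    (hStr : Str = ∑ l, Ωm l * (Ωm l)ᵀ)
    -- the random adjacency matrices
    (Ω' : Type) [MeasurableSpace Ω'] (μ : Measure Ω') [IsProbabilityMeasure μ]
    (A : Fin L → Ω' → Matrix (Fin nr) (Fin nc) ℝ)
    (hA01 : ∀ l ω i j, A l ω i j = 0 ∨ A l ω i j = 1)
    (hAmeas : ∀ l i j, Measurable (fun ω => A l ω i j))
    (hABer : ∀ l i j, μ {ω | A l ω i j = 1} = ENNReal.ofReal (Ωm l i j))
    (hAindep : iIndepFun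
      (fun p : Fin L × Fin nr × Fin nc => fun ω => A p.1 ω p.2.1 p.2.2) μ)
    -- the debiased matrix `S_r`
    (Sr : Ω' → Matrix (Fin nr) (Fin nr) ℝ)
    (hSr : ∀ ω, Sr ω = ∑ l, (A l ω * (A l ω)ᵀ
      - Matrix.diagonal (fun i => ∑ j, A l ω i j))) :
    (∀ i j : Fin nr, i ≠ j → (∫ ω, Sr ω i j ∂μ) = Str i j) ∧
    (∀ i : Fin nr, (∫ ω, Sr ω i i ∂μ) = Str i i - ∑ l, ∑ m, (Ωm l i m) ^ 2) :=
  stmt5_general nr nc Kr Kc L Zr Zc hZr01 hZc01 θr θc hθr hθc B hB01 Ωm hΩm Str hStr Ω' μ A hA01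
    hAmeas hABer hAindep Sr hSr
end

section
/- The expectation of the debiased matrix S_c satisfies: for all j ≠ j̃ in [n_c], E[S_c(j,j̃)] = S̃_c(j,j̃), and for every j ∈ [n_c], E[S_c(j,j)] = S̃_c(j,j) − Σ_{l=1}^L Σ_{m=1}^{n_r} Ω_l(m,j)^2. Equivalently, E[S_c] = S̃_c − C2 where C2 is the n_c × n_c diagonal matrix with C2(j,j) = Σ_{l=1}^L Σ_{m=1}^{n_r} Ω_l(m,j)^2. -/
/-!
Off the diagonal, an entry of `A_lᵀ A_l` is a sum of products `A_l(m,j) A_l(m,j̃)` of two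
independent Bernoulli variables, whose expectation is `Ω_l(m,j) Ω_l(m,j̃)`: the entry of
`Ω_lᵀ Ω_l`. On the diagonal `A_l(m,j)² = A_l(m,j)`, so subtracting the column sums makes
`S_c(j,j)` vanish identically, while `S̃_c(j,j) = ∑_l ∑_m Ω_l(m,j)²`.
-/

open Matrix Finset MeasureTheory ProbabilityTheory

namespace Matrix

variable {l m n R : Type*} [Fintype m]

def debiasedGram [Ring R] [DecidableEq n] (A : Matrix m n R) : Matrix n n R :=
  Aᵀ * A - diagonal fun j => ∑ i, A i j

lemma transpose_mul_self_apply [NonUnitalNonAssocSemiring R] (A : Matrix m n R) (j j' : n) :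
    (Aᵀ * A) j j' = ∑ i, A i j * A i j' := by
  simp only [mul_apply, transpose_apply]

lemma debiasedGram_apply_of_ne [Ring R] [DecidableEq n] (A : Matrix m n R) {j j' : n}
    (hne : j ≠ j') : debiasedGram A j j' = ∑ i, A i j * A i j' := by
  rw [debiasedGram, sub_apply, diagonal_apply_ne _ hne, sub_zero, transpose_mul_self_apply]

lemma debiasedGram_apply_self [Ring R] [DecidableEq n] {A : Matrix m n R}
    (hA : ∀ i j, IsIdempotentElem (A i j)) (j : n) : debiasedGram A j j = 0 := by
  simp only [debiasedGram, sub_apply, diagonal_apply_eq, transpose_mul_self_apply,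
    fun i => (hA i j).eq, sub_self]

lemma mul_apply_nonneg_s6 [Semiring R] [PartialOrder R] [IsOrderedRing R] {M : Matrix l m R}
    {N : Matrix m n R} (hM : ∀ i k, 0 ≤ M i k) (hN : ∀ k j, 0 ≤ N k j) (i : l) (j : n) :
    0 ≤ (M * N) i j :=
  sum_nonneg fun k _ => mul_nonneg (hM i k) (hN k j)

lemma diagonal_apply_nonneg_s6 [Semiring R] [PartialOrder R] [DecidableEq n] {d : n → R}
    (hd : ∀ i, 0 ≤ d i) (i j : n) : 0 ≤ diagonal d i j := by
  rw [diagonal_apply]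
  split_ifs
  exacts [hd i, le_rfl]

end Matrix

section ZeroOne

variable {Ω : Type*} [MeasurableSpace Ω] {μ : Measure Ω} {f : Ω → ℝ}

lemma integral_eq_of_zero_one (h01 : ∀ ω, f ω = 0 ∨ f ω = 1) (hf : Measurable f) {p : ℝ}
    (hp : 0 ≤ p) (hμ : μ {ω | f ω = 1} = ENNReal.ofReal p) : ∫ ω, f ω ∂μ = p := by
  have hf_eq : f = {ω | f ω = 1}.indicator 1 := by
    funext ω
    rcases h01 ω with h | h <;> simp [h]
  have hs : MeasurableSet {ω | f ω = 1} := hf (measurableSet_singleton 1)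
  rw [hf_eq, integral_indicator_one hs, measureReal_def, hμ,
    ENNReal.toReal_ofReal hp]

lemma integrable_of_zero_one [IsFiniteMeasure μ] (h01 : ∀ ω, f ω = 0 ∨ f ω = 1)
    (hf : Measurable f) : Integrable f μ :=
  .of_bound hf.aestronglyMeasurable 1 <| .of_forall fun ω => by
    rcases h01 ω with h | h <;> simp [h]

end ZeroOne

section IndependentEntries

variable {Ω : Type*} [MeasurableSpace Ω] {μ : Measure Ω} {m n : Type*} {X : Ω → Matrix m n ℝ}
  {j j' : n}

lemma integrable_mul_apply_of_ne (hint : ∀ i j, Integrable (fun ω => X ω i j) μ)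
    (hindep : iIndepFun (fun p : m × n => fun ω => X ω p.1 p.2) μ) (hne : j ≠ j') (i : m) :
    Integrable (fun ω => X ω i j * X ω i j') μ :=
  (hindep.indepFun (i := (i, j)) (j := (i, j')) (by simp [hne])).integrable_mul
    (hint i j) (hint i j')

lemma integrable_debiasedGram_apply_of_ne [Fintype m] [DecidableEq n]
    (hint : ∀ i j, Integrable (fun ω => X ω i j) μ)
    (hindep : iIndepFun (fun p : m × n => fun ω => X ω p.1 p.2) μ) (hne : j ≠ j') :
    Integrable (fun ω => debiasedGram (X ω) j j') μ := by
  simp only [debiasedGram_apply_of_ne _ hne]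
  exact integrable_finsetSum _ fun i _ => integrable_mul_apply_of_ne hint hindep hne i

lemma integral_debiasedGram_apply_of_ne [Fintype m] [DecidableEq n]
    (hint : ∀ i j, Integrable (fun ω => X ω i j) μ)
    (hindep : iIndepFun (fun p : m × n => fun ω => X ω p.1 p.2) μ) (hne : j ≠ j') :
    ∫ ω, debiasedGram (X ω) j j' ∂μ = ∑ i, (∫ ω, X ω i j ∂μ) * ∫ ω, X ω i j' ∂μ := by
  simp only [debiasedGram_apply_of_ne _ hne]
  rw [integral_finsetSum _ fun i _ => integrable_mul_apply_of_ne hint hindep hne i]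
  exact sum_congr rfl fun i _ =>
    (hindep.indepFun (i := (i, j)) (j := (i, j')) (by simp [hne])).integral_mul_eq_mul_integral
      (hint i j).aestronglyMeasurable (hint i j').aestronglyMeasurable

end IndependentEntries

theorem stmt6_general
    (nr nc Kr Kc L : ℕ)
    (Zr : Matrix (Fin nr) (Fin Kr) ℝ) (Zc : Matrix (Fin nc) (Fin Kc) ℝ)
    (hZr01 : ∀ i k, Zr i k = 0 ∨ Zr i k = 1)
    (hZc01 : ∀ j k, Zc j k = 0 ∨ Zc j k = 1)
    (θr : Fin nr → ℝ) (θc : Fin nc → ℝ)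
    (hθr : ∀ i, 0 < θr i ∧ θr i ≤ 1) (hθc : ∀ j, 0 < θc j ∧ θc j ≤ 1)
    (B : Fin L → Matrix (Fin Kr) (Fin Kc) ℝ)
    (hB01 : ∀ l k k', 0 ≤ B l k k' ∧ B l k k' ≤ 1)
    (Ωm : Fin L → Matrix (Fin nr) (Fin nc) ℝ)
    (hΩm : ∀ l, Ωm l = Matrix.diagonal θr * Zr * B l * (Zc)ᵀ * Matrix.diagonal θc)
    (Stc : Matrix (Fin nc) (Fin nc) ℝ)
    (hStc : Stc = ∑ l, (Ωm l)ᵀ * Ωm l)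
    -- the random adjacency matrices
    (Ω' : Type) [MeasurableSpace Ω'] (μ : Measure Ω') [IsProbabilityMeasure μ]
    (A : Fin L → Ω' → Matrix (Fin nr) (Fin nc) ℝ)
    (hA01 : ∀ l ω i j, A l ω i j = 0 ∨ A l ω i j = 1)
    (hAmeas : ∀ l i j, Measurable (fun ω => A l ω i j))
    (hABer : ∀ l i j, μ {ω | A l ω i j = 1} = ENNReal.ofReal (Ωm l i j))
    (hAindep : iIndepFun
      (fun p : Fin L × Fin nr × Fin nc => fun ω => A p.1 ω p.2.1 p.2.2) μ)
    -- the debiased matrix `S_c`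
    (Sc : Ω' → Matrix (Fin nc) (Fin nc) ℝ)
    (hSc : ∀ ω, Sc ω = ∑ l, ((A l ω)ᵀ * A l ω
      - Matrix.diagonal (fun j => ∑ i, A l ω i j))) :
    (∀ j j₂ : Fin nc, j ≠ j₂ → (∫ ω, Sc ω j j₂ ∂μ) = Stc j j₂) ∧
    (∀ j : Fin nc, (∫ ω, Sc ω j j ∂μ) = Stc j j - ∑ l, ∑ m, (Ωm l m j) ^ 2) := by
  have hSc' : ∀ ω j j₂, Sc ω j j₂ = ∑ l, debiasedGram (A l ω) j j₂ := fun ω j j₂ => by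
    rw [hSc, Matrix.sum_apply]; rfl
  have hStc' : ∀ j j₂, Stc j j₂ = ∑ l, ∑ m, Ωm l m j * Ωm l m j₂ := fun j j₂ => by
    simp only [hStc, Matrix.sum_apply, transpose_mul_self_apply]
  have hΩnn : ∀ l i j, 0 ≤ Ωm l i j := fun l i j => by
    have nonneg01 {a : ℝ} (h : a = 0 ∨ a = 1) : 0 ≤ a := by rcases h with h | h <;> simp [h]
    rw [hΩm]
    refine mul_apply_nonneg_s6 (mul_apply_nonneg_s6 (mul_apply_nonneg_s6 (mul_apply_nonneg_s6
      (diagonal_apply_nonneg_s6 fun i => (hθr i).1.le) fun i k => nonneg01 (hZr01 i k))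
      fun k k' => (hB01 l k k').1) fun k j => nonneg01 (hZc01 j k))
      (diagonal_apply_nonneg_s6 fun j => (hθc j).1.le) i j
  have hint : ∀ l i j, Integrable (fun ω => A l ω i j) μ := fun l i j =>
    integrable_of_zero_one (hA01 l · i j) (hAmeas l i j)
  have hE : ∀ l i j, ∫ ω, A l ω i j ∂μ = Ωm l i j := fun l i j =>
    integral_eq_of_zero_one (hA01 l · i j) (hAmeas l i j) (hΩnn l i j) (hABer l i j)
  have hlayer : ∀ l, iIndepFun (fun p : Fin nr × Fin nc => fun ω => A l ω p.1 p.2) μ :=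
    fun l => hAindep.precomp (g := fun p => (l, p)) fun _ _ h => (Prod.ext_iff.1 h).2
  refine ⟨fun j j₂ hne => ?_, fun j => ?_⟩
  · simp only [hSc', hStc']
    rw [integral_finsetSum _ fun l _ => integrable_debiasedGram_apply_of_ne (hint l) (hlayer l) hne]
    exact sum_congr rfl fun l _ => by
      simp only [integral_debiasedGram_apply_of_ne (hint l) (hlayer l) hne, hE]
  · have hidem : ∀ l ω i j, IsIdempotentElem (A l ω i j) := fun l ω i j => by
      rcases hA01 l ω i j with h | h <;> simp [h, IsIdempotentElem]
    simp only [hSc', debiasedGram_apply_self (hidem _ _), sum_const_zero, integral_zero, hStc',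
      sq, sub_self]

/-- expectation of the debiased matrix `S_c`.
Under the multi-layer DC-ScBM, the off-diagonal entries of `E[S_c]` equal those of `S̃_c`,
and the diagonal entries satisfy `E[S_c(j,j)] = S̃_c(j,j) − ∑_l ∑_m Ω_l(m,j)²`. -/
theorem stmt6
    (nr nc Kr Kc L : ℕ)
    (hnr : 0 < nr) (hnc : 0 < nc) (hKr : 0 < Kr) (hKc : 0 < Kc) (hL : 0 < L)
    (Zr : Matrix (Fin nr) (Fin Kr) ℝ) (Zc : Matrix (Fin nc) (Fin Kc) ℝ)
    (hZr01 : ∀ i k, Zr i k = 0 ∨ Zr i k = 1)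
    (hZrrow : ∀ i, ∃! k, Zr i k = 1)
    (hZrcol : ∀ k, ∃ i, Zr i k = 1)
    (hZc01 : ∀ j k, Zc j k = 0 ∨ Zc j k = 1)
    (hZcrow : ∀ j, ∃! k, Zc j k = 1)
    (hZccol : ∀ k, ∃ j, Zc j k = 1)
    (θr : Fin nr → ℝ) (θc : Fin nc → ℝ)
    (hθr : ∀ i, 0 < θr i ∧ θr i ≤ 1) (hθc : ∀ j, 0 < θc j ∧ θc j ≤ 1)
    (B : Fin L → Matrix (Fin Kr) (Fin Kc) ℝ)
    (hB01 : ∀ l k k', 0 ≤ B l k k' ∧ B l k k' ≤ 1)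
    (Ωm : Fin L → Matrix (Fin nr) (Fin nc) ℝ)
    (hΩm : ∀ l, Ωm l = Matrix.diagonal θr * Zr * B l * (Zc)ᵀ * Matrix.diagonal θc)
    (Stc : Matrix (Fin nc) (Fin nc) ℝ)
    (hStc : Stc = ∑ l, (Ωm l)ᵀ * Ωm l)
    -- the random adjacency matrices
    (Ω' : Type) [MeasurableSpace Ω'] (μ : Measure Ω') [IsProbabilityMeasure μ]
    (A : Fin L → Ω' → Matrix (Fin nr) (Fin nc) ℝ)
    (hA01 : ∀ l ω i j, A l ω i j = 0 ∨ A l ω i j = 1)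
    (hAmeas : ∀ l i j, Measurable (fun ω => A l ω i j))
    (hABer : ∀ l i j, μ {ω | A l ω i j = 1} = ENNReal.ofReal (Ωm l i j))
    (hAindep : iIndepFun
      (fun p : Fin L × Fin nr × Fin nc => fun ω => A p.1 ω p.2.1 p.2.2) μ)
    -- the debiased matrix `S_c`
    (Sc : Ω' → Matrix (Fin nc) (Fin nc) ℝ)
    (hSc : ∀ ω, Sc ω = ∑ l, ((A l ω)ᵀ * A l ω
      - Matrix.diagonal (fun j => ∑ i, A l ω i j))) :
    (∀ j j₂ : Fin nc, j ≠ j₂ → (∫ ω, Sc ω j j₂ ∂μ) = Stc j j₂) ∧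
    (∀ j : Fin nc, (∫ ω, Sc ω j j ∂μ) = Stc j j - ∑ l, ∑ m, (Ωm l m j) ^ 2) :=
  stmt6_general nr nc Kr Kc L Zr Zc hZr01 hZc01 θr θc hθr hθc B hB01 Ωm hΩm Stc hStc Ω' μ A hA01
    hAmeas hABer hAindep Sc hSc
end

section
/- The matrix S̃_c is symmetric positive semidefinite, and its K_c-th largest eigenvalue satisfies λ_{K_c}(S̃_c) ≥ θ_{r,min}^2 · θ_{c,min}^2 · n_{r,min} · n_{c,min} · λ_min(Σ_{l=1}^L B_l^T B_l), where λ_min(Σ_{l=1}^L B_l^T B_l) denotes the smallest eigenvalue of the K_c × K_c positive semidefinite matrix Σ_{l=1}^L B_l^T B_l. -/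
/-!
Let `G_r = Θ_r Z_r` and `G_c = Θ_c Z_c`, so that `Ω_l = G_r B_l G_cᵀ`. The Gram matrices
`G_rᵀ G_r` and `G_cᵀ G_c` are diagonal, the `k`-th entry being the sum of `θ²` over the `k`-th
community, hence at least `θ_min² n_min`. For `x = G_c y` and `z = G_cᵀ x` this gives
`Ω_l x = G_r (B_l z)` and
`xᵀ S̃_c x = ∑_l |G_r B_l z|² ≥ θ_{r,min}² n_{r,min} λ_min |z|² ≥ c |x|²`,
with `c` the claimed bound. So the quadratic form of `S̃_c` is at least `c |x|²` on the range
of `G_c`, which has dimension `K_c` because every column community is non-empty and `θ_c > 0`;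
by the Courant–Fischer principle `S̃_c` has at least `K_c` eigenvalues `≥ c`.
-/

open Matrix Finset

namespace Matrix.IsHermitian

variable {n : Type*} [Fintype n] [DecidableEq n] {A : Matrix n n ℝ} (hA : A.IsHermitian)

noncomputable def eigenCoords (x : n → ℝ) : n → ℝ :=
  star (hA.eigenvectorUnitary : Matrix n n ℝ) *ᵥ x

lemma dotProduct_mulVec_eq_dotProduct_eigenCoords (x y : n → ℝ) :
    x ⬝ᵥ ((hA.eigenvectorUnitary : Matrix n n ℝ) *ᵥ y) = hA.eigenCoords x ⬝ᵥ y := by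
  rw [dotProduct_mulVec, eigenCoords, star_eq_conjTranspose, conjTranspose_eq_transpose_of_trivial,
    ← vecMul_transpose, transpose_transpose]

lemma dotProduct_mulVec_eq_sum_eigenvalues (x : n → ℝ) :
    x ⬝ᵥ (A *ᵥ x) = ∑ j, hA.eigenvalues j * hA.eigenCoords x j ^ 2 := by
  conv_lhs => rw [hA.spectral_theorem, Unitary.conjStarAlgAut_apply]
  rw [← mulVec_mulVec, ← mulVec_mulVec, dotProduct_mulVec_eq_dotProduct_eigenCoords]
  simp only [mulVec_diagonal, dotProduct, Function.comp_apply, RCLike.ofReal_real_eq_id, id]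
  exact sum_congr rfl fun j _ => by unfold eigenCoords; ring

lemma dotProduct_self_eq_sum_eigenCoords (x : n → ℝ) :
    x ⬝ᵥ x = ∑ j, hA.eigenCoords x j ^ 2 := by
  have hU : (hA.eigenvectorUnitary : Matrix n n ℝ) * star (hA.eigenvectorUnitary : Matrix n n ℝ)
      = 1 := Unitary.coe_mul_star_self _
  have hx : x = (hA.eigenvectorUnitary : Matrix n n ℝ) *ᵥ hA.eigenCoords x := by
    rw [eigenCoords, mulVec_mulVec, hU, one_mulVec]
  nth_rw 2 [hx]
  rw [dotProduct_mulVec_eq_dotProduct_eigenCoords]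
  simp only [dotProduct, sq]

lemma mul_dotProduct_self_le_dotProduct_mulVec {c : ℝ} (hc : ∀ j, c ≤ hA.eigenvalues j)
    (x : n → ℝ) : c * (x ⬝ᵥ x) ≤ x ⬝ᵥ (A *ᵥ x) := by
  rw [hA.dotProduct_mulVec_eq_sum_eigenvalues, hA.dotProduct_self_eq_sum_eigenCoords, mul_sum]
  exact sum_le_sum fun j _ => mul_le_mul_of_nonneg_right (hc j) (sq_nonneg _)

/-- The lower half of the Courant–Fischer min-max principle. -/
theorem finrank_le_card_le_eigenvalues {c : ℝ} (V : Submodule ℝ (n → ℝ))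
    (hV : ∀ x ∈ V, c * (x ⬝ᵥ x) ≤ x ⬝ᵥ (A *ᵥ x)) :
    Module.finrank ℝ V ≤ #{j | c ≤ hA.eigenvalues j} := by
  set S : Finset n := {j | c ≤ hA.eigenvalues j}
  let π : V →ₗ[ℝ] (S → ℝ) :=
    mulVecLin ((star (hA.eigenvectorUnitary : Matrix n n ℝ)).submatrix (Subtype.val : S → n) id)
      ∘ₗ V.subtype
  by_contra! hlt
  obtain ⟨⟨x, hxV⟩, hxker, hx0⟩ := Submodule.exists_mem_ne_zero_of_ne_bot
    (LinearMap.ker_ne_bot_of_finrank_lt (f := π) (by simpa using hlt))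
  have hS : ∀ j ∈ S, hA.eigenCoords x j = 0 := fun j hj =>
    congrFun (LinearMap.mem_ker.mp hxker) ⟨j, hj⟩
  have hpos : 0 < ∑ j, (c - hA.eigenvalues j) * hA.eigenCoords x j ^ 2 := by
    obtain ⟨j, hj⟩ : ∃ j, hA.eigenCoords x j ≠ 0 := by
      by_contra! h
      refine hx0 (Subtype.ext (dotProduct_self_eq_zero.mp ?_))
      simp [hA.dotProduct_self_eq_sum_eigenCoords, h]
    have hlt : ∀ k ∉ S, hA.eigenvalues k < c := by simp [S]
    refine sum_pos' (fun k _ => ?_) ⟨j, mem_univ _, ?_⟩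
    · by_cases hk : k ∈ S
      · simp [hS k hk]
      · exact mul_nonneg (sub_nonneg.2 (hlt k hk).le) (sq_nonneg _)
    · exact mul_pos (sub_pos.2 (hlt j fun h => hj (hS j h))) (by positivity)
  have := hV x hxV
  rw [hA.dotProduct_mulVec_eq_sum_eigenvalues, hA.dotProduct_self_eq_sum_eigenCoords,
    mul_sum] at this
  simp only [sub_mul, sum_sub_distrib] at hpos
  linarith

end Matrix.IsHermitian

section Gram

variable {m n ι : Type*} [Fintype m] [Fintype n] [Fintype ι]

lemma dotProduct_transpose_mul_self_mulVec (A : Matrix m n ℝ) (x : n → ℝ) :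
    x ⬝ᵥ ((Aᵀ * A) *ᵥ x) = (A *ᵥ x) ⬝ᵥ (A *ᵥ x) := by
  rw [← mulVec_mulVec, dotProduct_mulVec, vecMul_transpose]

lemma dotProduct_sum_transpose_mul_self_mulVec (A : ι → Matrix m n ℝ) (x : n → ℝ) :
    x ⬝ᵥ ((∑ l, (A l)ᵀ * A l) *ᵥ x) = ∑ l, (A l *ᵥ x) ⬝ᵥ (A l *ᵥ x) := by
  simp only [sum_mulVec, dotProduct_sum, dotProduct_transpose_mul_self_mulVec]

lemma posSemidef_sum_transpose_mul_self (A : ι → Matrix m n ℝ) :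
    (∑ l, (A l)ᵀ * A l).PosSemidef :=
  posSemidef_sum _ fun l _ => by simpa using posSemidef_conjTranspose_mul_self (A l)

variable {p q : Type*} [Fintype p] [Fintype q]

/-- With `x = H y` and `z = Hᵀ x`, every `(G * B l * Hᵀ) x` equals `G (B l z)`, so the three
quadratic lower bounds chain together. -/
lemma mul_dotProduct_self_le_dotProduct_sum_transpose_mul_self_mulVec
    (G : Matrix m p ℝ) (B : ι → Matrix p q ℝ) (H : Matrix n q ℝ) {α β γ : ℝ}
    (hα : 0 ≤ α) (hβ : 0 ≤ β)
    (hG : ∀ w, α * (w ⬝ᵥ w) ≤ (G *ᵥ w) ⬝ᵥ (G *ᵥ w))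
    (hB : ∀ z, β * (z ⬝ᵥ z) ≤ z ⬝ᵥ ((∑ l, (B l)ᵀ * B l) *ᵥ z))
    (hH : ∀ y, γ * ((H *ᵥ y) ⬝ᵥ (H *ᵥ y)) ≤ (Hᵀ *ᵥ (H *ᵥ y)) ⬝ᵥ (Hᵀ *ᵥ (H *ᵥ y)))
    (y : q → ℝ) :
    α * β * γ * ((H *ᵥ y) ⬝ᵥ (H *ᵥ y)) ≤
      (H *ᵥ y) ⬝ᵥ ((∑ l, (G * B l * Hᵀ)ᵀ * (G * B l * Hᵀ)) *ᵥ (H *ᵥ y)) := by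
  set x := H *ᵥ y
  set z := Hᵀ *ᵥ x
  calc α * β * γ * (x ⬝ᵥ x) = α * (β * (γ * (x ⬝ᵥ x))) := by ring
    _ ≤ α * (β * (z ⬝ᵥ z)) := by gcongr; exact hH y
    _ ≤ α * (z ⬝ᵥ ((∑ l, (B l)ᵀ * B l) *ᵥ z)) := by gcongr; exact hB z
    _ = ∑ l, α * ((B l *ᵥ z) ⬝ᵥ (B l *ᵥ z)) := by
      rw [dotProduct_sum_transpose_mul_self_mulVec, mul_sum]
    _ ≤ ∑ l, (G *ᵥ (B l *ᵥ z)) ⬝ᵥ (G *ᵥ (B l *ᵥ z)) := sum_le_sum fun l _ => hG _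
    _ = _ := by
      simp only [dotProduct_sum_transpose_mul_self_mulVec, z, mulVec_mulVec, Matrix.mul_assoc]

end Gram

section Diagonal

variable {K : Type*} [Fintype K] [DecidableEq K] {d : K → ℝ} {μ : ℝ}

lemma mul_dotProduct_self_le_dotProduct_diagonal_mulVec (hd : ∀ k, μ ≤ d k) (u : K → ℝ) :
    μ * (u ⬝ᵥ u) ≤ u ⬝ᵥ (diagonal d *ᵥ u) := by
  simp only [mulVec_diagonal, dotProduct, mul_sum]
  refine sum_le_sum fun k _ => ?_
  nlinarith [hd k, mul_self_nonneg (u k)]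

lemma mul_dotProduct_diagonal_mulVec_le (hμ : 0 ≤ μ) (hd : ∀ k, μ ≤ d k) (u : K → ℝ) :
    μ * (u ⬝ᵥ (diagonal d *ᵥ u)) ≤ (diagonal d *ᵥ u) ⬝ᵥ (diagonal d *ᵥ u) := by
  simp only [mulVec_diagonal, dotProduct, mul_sum]
  refine sum_le_sum fun k _ => ?_
  have := mul_nonneg (mul_nonneg (sub_nonneg.2 (hd k)) (hμ.trans (hd k))) (mul_self_nonneg (u k))
  nlinarith

end Diagonal

section Membership

variable {m K : Type*} [DecidableEq K]

def membershipMatrix (κ : m → K) : Matrix m K ℝ := of fun i k => if κ i = k then 1 else 0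

@[simp]
lemma membershipMatrix_apply_eq_one {κ : m → K} {i : m} {k : K} :
    membershipMatrix κ i k = 1 ↔ κ i = k := by
  simp [membershipMatrix]

lemma exists_eq_membershipMatrix {Z : Matrix m K ℝ} (h01 : ∀ i k, Z i k = 0 ∨ Z i k = 1)
    (hrow : ∀ i, ∃! k, Z i k = 1) : ∃ κ : m → K, Z = membershipMatrix κ := by
  choose κ hκ hκ_unique using hrow
  refine ⟨κ, ext fun i k => ?_⟩
  rcases h01 i k with h | h
  · have hne : κ i ≠ k := by
      rintro rfl
      exact zero_ne_one (h.symm.trans (hκ i))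
    simp [membershipMatrix, h, hne]
  · obtain rfl := hκ_unique i k h
    simp [membershipMatrix, h]

lemma membershipMatrix_mulVec_apply [Fintype K] (κ : m → K) (u : K → ℝ) (i : m) :
    (membershipMatrix κ *ᵥ u) i = u (κ i) := by
  simp [membershipMatrix, mulVec, dotProduct]

variable [Fintype m] [DecidableEq m]

lemma transpose_mul_self_diagonal_mul_membershipMatrix (θ : m → ℝ) (κ : m → K) :
    (diagonal θ * membershipMatrix κ)ᵀ * (diagonal θ * membershipMatrix κ) =
      diagonal fun k => ∑ i with κ i = k, θ i ^ 2 := by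
  ext k k'
  simp only [mul_apply, diagonal, membershipMatrix, sum_filter, transpose_apply, of_apply,
    ite_mul, zero_mul, sum_ite_eq, mem_univ, if_true]
  split_ifs with hk
  · subst hk
    exact sum_congr rfl fun i _ => by split_ifs <;> ring
  · exact sum_eq_zero fun i _ => by split_ifs <;> simp_all

variable [Fintype K]

lemma mulVec_diagonal_mul_membershipMatrix_apply (θ : m → ℝ) (κ : m → K) (u : K → ℝ) (i : m) :
    ((diagonal θ * membershipMatrix κ) *ᵥ u) i = θ i * u (κ i) := by
  rw [← mulVec_mulVec, mulVec_diagonal, membershipMatrix_mulVec_apply]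

lemma injective_mulVec_diagonal_mul_membershipMatrix {θ : m → ℝ} (hθ : ∀ i, θ i ≠ 0)
    {κ : m → K} (hκ : Function.Surjective κ) :
    Function.Injective (diagonal θ * membershipMatrix κ).mulVec := by
  intro u v huv
  funext k
  obtain ⟨i, rfl⟩ := hκ k
  have := congrFun huv i
  rw [mulVec_diagonal_mul_membershipMatrix_apply,
    mulVec_diagonal_mul_membershipMatrix_apply] at this
  exact mul_left_cancel₀ (hθ i) this

end Membership

lemma sq_mul_le_sum_sq_of_le_card {m K : Type*} [Fintype m] [DecidableEq K] {θ : m → ℝ} {t : ℝ}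
    (ht : 0 ≤ t) (htθ : ∀ i, t ≤ θ i) {κ : m → K} {N : ℕ} {k : K} (hN : N ≤ #{i | κ i = k}) :
    t ^ 2 * N ≤ ∑ i with κ i = k, θ i ^ 2 := by
  calc t ^ 2 * N ≤ #{i | κ i = k} • t ^ 2 := by
        rw [nsmul_eq_mul, mul_comm]; gcongr
    _ ≤ _ := card_nsmul_le_sum _ _ _ fun i _ => pow_le_pow_left₀ ht (htθ i) 2

section WeightedMembership

variable {m K : Type*} [Fintype m] [DecidableEq m] [Fintype K] [DecidableEq K]
  {θ : m → ℝ} {t : ℝ} {κ : m → K} {N : ℕ}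

lemma mul_dotProduct_self_le_dotProduct_diagonal_mul_membershipMatrix_mulVec (ht : 0 ≤ t)
    (htθ : ∀ i, t ≤ θ i) (hN : ∀ k, N ≤ #{i | κ i = k}) (u : K → ℝ) :
    t ^ 2 * N * (u ⬝ᵥ u) ≤
      ((diagonal θ * membershipMatrix κ) *ᵥ u) ⬝ᵥ ((diagonal θ * membershipMatrix κ) *ᵥ u) := by
  rw [← dotProduct_transpose_mul_self_mulVec, transpose_mul_self_diagonal_mul_membershipMatrix]
  exact mul_dotProduct_self_le_dotProduct_diagonal_mulVec
    (fun k => sq_mul_le_sum_sq_of_le_card ht htθ (hN k)) u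

lemma mul_dotProduct_diagonal_mul_membershipMatrix_mulVec_le (ht : 0 ≤ t)
    (htθ : ∀ i, t ≤ θ i) (hN : ∀ k, N ≤ #{i | κ i = k}) (u : K → ℝ) :
    t ^ 2 * N *
        (((diagonal θ * membershipMatrix κ) *ᵥ u) ⬝ᵥ ((diagonal θ * membershipMatrix κ) *ᵥ u)) ≤
      ((diagonal θ * membershipMatrix κ)ᵀ *ᵥ ((diagonal θ * membershipMatrix κ) *ᵥ u)) ⬝ᵥ
        ((diagonal θ * membershipMatrix κ)ᵀ *ᵥ ((diagonal θ * membershipMatrix κ) *ᵥ u)) := by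
  rw [mulVec_mulVec, transpose_mul_self_diagonal_mul_membershipMatrix,
    ← dotProduct_transpose_mul_self_mulVec (diagonal θ * membershipMatrix κ) u,
    transpose_mul_self_diagonal_mul_membershipMatrix]
  exact mul_dotProduct_diagonal_mulVec_le (by positivity)
    (fun k => sq_mul_le_sum_sq_of_le_card ht htθ (hN k)) u

end WeightedMembership

theorem stmt13_general
    (nr nc Kr Kc L : ℕ)
    (Zr : Matrix (Fin nr) (Fin Kr) ℝ) (Zc : Matrix (Fin nc) (Fin Kc) ℝ)
    (hZr01 : ∀ i k, Zr i k = 0 ∨ Zr i k = 1)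
    (hZrrow : ∀ i, ∃! k, Zr i k = 1)
    (hZc01 : ∀ j k, Zc j k = 0 ∨ Zc j k = 1)
    (hZcrow : ∀ j, ∃! k, Zc j k = 1)
    (hZccol : ∀ k, ∃ j, Zc j k = 1)
    (θr : Fin nr → ℝ) (θc : Fin nc → ℝ)
    (hθr : ∀ i, 0 < θr i ∧ θr i ≤ 1) (hθc : ∀ j, 0 < θc j ∧ θc j ≤ 1)
    (B : Fin L → Matrix (Fin Kr) (Fin Kc) ℝ)
    (Ωm : Fin L → Matrix (Fin nr) (Fin nc) ℝ)
    (hΩm : ∀ l, Ωm l = Matrix.diagonal θr * Zr * B l * (Zc)ᵀ * Matrix.diagonal θc)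
    (Stc : Matrix (Fin nc) (Fin nc) ℝ)
    (hStc : Stc = ∑ l, (Ωm l)ᵀ * Ωm l)
    (θrmin θcmin : ℝ)
    (hθrmin : IsLeast (Set.range θr) θrmin)
    (hθcmin : IsLeast (Set.range θc) θcmin)
    (nrmin ncmin : ℕ)
    (hnrmin : IsLeast
      (Set.range fun k : Fin Kr => (Finset.univ.filter fun i => Zr i k = 1).card) nrmin)
    (hncmin : IsLeast
      (Set.range fun k : Fin Kc => (Finset.univ.filter fun j => Zc j k = 1).card) ncmin)
    -- the smallest eigenvalue of `∑ l, (B l)ᵀ * B l`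
    (hBH : (∑ l, (B l)ᵀ * B l).IsHermitian)
    (lamB : ℝ) (hlamB : IsLeast (Set.range hBH.eigenvalues) lamB) :
    Stc.PosSemidef ∧
    ∃ hH : Stc.IsHermitian,
      Kc ≤ (Finset.univ.filter fun j : Fin nc =>
        θrmin ^ 2 * θcmin ^ 2 * nrmin * ncmin * lamB ≤ hH.eigenvalues j).card := by
  obtain ⟨κr, rfl⟩ := exists_eq_membershipMatrix hZr01 hZrrow
  obtain ⟨κc, rfl⟩ := exists_eq_membershipMatrix hZc01 hZcrow
  have hpsd : Stc.PosSemidef := hStc ▸ posSemidef_sum_transpose_mul_self Ωm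
  refine ⟨hpsd, hpsd.isHermitian, ?_⟩
  obtain ⟨i₀, hi₀⟩ := hθrmin.1
  obtain ⟨j₀, hj₀⟩ := hθcmin.1
  obtain ⟨k₀, hk₀⟩ := hlamB.1
  have hGr := mul_dotProduct_self_le_dotProduct_diagonal_mul_membershipMatrix_mulVec
    (hi₀ ▸ (hθr i₀).1.le) (fun i => hθrmin.2 ⟨i, rfl⟩) (fun k => by simpa using hnrmin.2 ⟨k, rfl⟩)
  have hGc := mul_dotProduct_diagonal_mul_membershipMatrix_mulVec_le
    (hj₀ ▸ (hθc j₀).1.le) (fun j => hθcmin.2 ⟨j, rfl⟩) (fun k => by simpa using hncmin.2 ⟨k, rfl⟩)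
  have hB := hBH.mul_dotProduct_self_le_dotProduct_mulVec fun k => hlamB.2 ⟨k, rfl⟩
  have hinj := injective_mulVec_diagonal_mul_membershipMatrix (fun j => (hθc j).1.ne')
    fun k => by simpa using hZccol k
  calc Kc = Module.finrank ℝ (LinearMap.range (diagonal θc * membershipMatrix κc).mulVecLin) := by
        rw [LinearMap.finrank_range_of_inj hinj, Module.finrank_fin_fun]
    _ ≤ _ := hpsd.isHermitian.finrank_le_card_le_eigenvalues _ ?_
  rintro _ ⟨y, rfl⟩
  have := mul_dotProduct_self_le_dotProduct_sum_transpose_mul_self_mulVec _ B _ (by positivity)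
    (hk₀ ▸ (posSemidef_sum_transpose_mul_self B).eigenvalues_nonneg k₀) hGr hB hGc y
  simp only [hStc, hΩm, mulVecLin_apply, transpose_mul, diagonal_transpose,
    Matrix.mul_assoc] at this ⊢
  convert this using 1
  ring

/-- lower bound for the `K_c`-th largest eigenvalue of `S̃_c`.
`S̃_c` is symmetric positive semidefinite and at least `K_c` of its eigenvalues (with
multiplicity) are at least `θ_{r,min}² θ_{c,min}² n_{r,min} n_{c,min} λ_min(∑_l B_lᵀ B_l)`;
i.e. its `K_c`-th largest eigenvalue is bounded below by this quantity. -/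
theorem stmt13
    (nr nc Kr Kc L : ℕ)
    (hnr : 0 < nr) (hnc : 0 < nc) (hKr : 0 < Kr) (hKc : 0 < Kc) (hL : 0 < L)
    (Zr : Matrix (Fin nr) (Fin Kr) ℝ) (Zc : Matrix (Fin nc) (Fin Kc) ℝ)
    (hZr01 : ∀ i k, Zr i k = 0 ∨ Zr i k = 1)
    (hZrrow : ∀ i, ∃! k, Zr i k = 1)
    (hZrcol : ∀ k, ∃ i, Zr i k = 1)
    (hZc01 : ∀ j k, Zc j k = 0 ∨ Zc j k = 1)
    (hZcrow : ∀ j, ∃! k, Zc j k = 1)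
    (hZccol : ∀ k, ∃ j, Zc j k = 1)
    (θr : Fin nr → ℝ) (θc : Fin nc → ℝ)
    (hθr : ∀ i, 0 < θr i ∧ θr i ≤ 1) (hθc : ∀ j, 0 < θc j ∧ θc j ≤ 1)
    (B : Fin L → Matrix (Fin Kr) (Fin Kc) ℝ)
    (hB01 : ∀ l k k', 0 ≤ B l k k' ∧ B l k k' ≤ 1)
    (Ωm : Fin L → Matrix (Fin nr) (Fin nc) ℝ)
    (hΩm : ∀ l, Ωm l = Matrix.diagonal θr * Zr * B l * (Zc)ᵀ * Matrix.diagonal θc)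
    (Stc : Matrix (Fin nc) (Fin nc) ℝ)
    (hStc : Stc = ∑ l, (Ωm l)ᵀ * Ωm l)
    (θrmin θcmin : ℝ)
    (hθrmin : IsLeast (Set.range θr) θrmin)
    (hθcmin : IsLeast (Set.range θc) θcmin)
    (nrmin ncmin : ℕ)
    (hnrmin : IsLeast
      (Set.range fun k : Fin Kr => (Finset.univ.filter fun i => Zr i k = 1).card) nrmin)
    (hncmin : IsLeast
      (Set.range fun k : Fin Kc => (Finset.univ.filter fun j => Zc j k = 1).card) ncmin)
    -- the smallest eigenvalue of `∑ l, (B l)ᵀ * B l`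
    (hBH : (∑ l, (B l)ᵀ * B l).IsHermitian)
    (lamB : ℝ) (hlamB : IsLeast (Set.range hBH.eigenvalues) lamB) :
    Stc.PosSemidef ∧
    ∃ hH : Stc.IsHermitian,
      Kc ≤ (Finset.univ.filter fun j : Fin nc =>
        θrmin ^ 2 * θcmin ^ 2 * nrmin * ncmin * lamB ≤ hH.eigenvalues j).card :=
  stmt13_general nr nc Kr Kc L Zr Zc hZr01 hZrrow hZc01 hZcrow hZccol θr θc hθr hθc B Ωm hΩm Stc
    hStc θrmin θcmin hθrmin hθcmin nrmin ncmin hnrmin hncmin hBH lamB hlamB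
end

section
/- Let Z be an n × K membership matrix (each row of Z has exactly one entry equal to 1, each column of Z is nonzero), let θ ∈ ℝ^n with 0 < θ_min ≤ θ(i) ≤ θ_max for all i, and let Θ = diag(θ). Suppose U is an n × K real matrix with orthonormal columns (U^T U = I_K) such that U = Θ Z X for some K × K real matrix X. Let n_max be the maximum community size (maximum column sum of Z). Then for every i ∈ [n], the Euclidean norm of the i-th row of U satisfies ‖U(i,:)‖ ≥ θ_min/(θ_max · √n_max). -/
open Matrix Finset

/-- lower bound on the row norms of the population eigenvector matrix.
If `Z` is an `n × K` membership matrix, `Θ = diag θ` with `0 < θ_min ≤ θ i ≤ θ_max`, and `U`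
has orthonormal columns with `U = Θ Z X` for some `K × K` matrix `X`, then every row of `U`
has Euclidean norm at least `θ_min / (θ_max √n_max)`, where `n_max` is the maximum community
size. -/
theorem stmt14
    (n K : ℕ) (hn : 0 < n) (hK : 0 < K)
    (Z : Matrix (Fin n) (Fin K) ℝ)
    (hZ01 : ∀ i k, Z i k = 0 ∨ Z i k = 1)
    (hZrow : ∀ i, ∃! k, Z i k = 1)
    (hZcol : ∀ k, ∃ i, Z i k = 1)
    (θ : Fin n → ℝ) (θmin θmax : ℝ)
    (hθmin : 0 < θmin) (hθ : ∀ i, θmin ≤ θ i ∧ θ i ≤ θmax)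
    (U : Matrix (Fin n) (Fin K) ℝ)
    (hUorth : (U)ᵀ * U = 1)
    (X : Matrix (Fin K) (Fin K) ℝ)
    (hUX : U = Matrix.diagonal θ * Z * X)
    (nmax : ℕ)
    (hnmax : IsGreatest
      (Set.range fun k : Fin K => (Finset.univ.filter fun i => Z i k = 1).card) nmax) :
    ∀ i : Fin n,
      θmin / (θmax * Real.sqrt nmax) ≤ Real.sqrt (∑ k, (U i k) ^ 2) := by
  intro i
  obtain ⟨k₀, hk₀, huniq⟩ := hZrow i
  have hθi := hθ i
  have hθmax : 0 < θmax := lt_of_lt_of_le hθmin (hθi.1.trans hθi.2)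
  -- nmax ≥ 1
  have hnmax1 : 1 ≤ nmax := by
    obtain ⟨j, hj⟩ := hZcol k₀
    have hle := hnmax.2 ⟨k₀, rfl⟩
    refine le_trans ?_ hle
    have : j ∈ Finset.univ.filter fun i' => Z i' k₀ = 1 := by simp [hj]
    exact Finset.card_pos.mpr ⟨j, this⟩
  have hnmaxR : (0 : ℝ) < (nmax : ℝ) := by exact_mod_cast hnmax1
  -- norm preservation
  have hnorm : ∀ v : Fin K → ℝ, (U *ᵥ v) ⬝ᵥ (U *ᵥ v) = v ⬝ᵥ v := by
    intro v
    rw [Matrix.dotProduct_mulVec, ← Matrix.vecMul_transpose, Matrix.vecMul_vecMul, hUorth,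
      Matrix.vecMul_one]
  -- X injective
  have hX0 : ∀ v : Fin K → ℝ, X *ᵥ v = 0 → v = 0 := by
    intro v hv
    have hU0 : U *ᵥ v = 0 := by
      rw [hUX, ← Matrix.mulVec_mulVec, hv, Matrix.mulVec_zero]
    have := hnorm v
    rw [hU0, dotProduct_zero] at this
    exact dotProduct_self_eq_zero.mp this.symm
  have hinj : Function.Injective X.mulVecLin := by
    rw [← LinearMap.ker_eq_bot, LinearMap.ker_eq_bot']
    intro v hv
    exact hX0 v hv
  obtain ⟨w, hw⟩ := LinearMap.injective_iff_surjective.mp hinj (Pi.single k₀ 1)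
  rw [Matrix.mulVecLin_apply] at hw
  -- U *ᵥ w entries
  have hUw : ∀ i' : Fin n, (U *ᵥ w) i' = θ i' * Z i' k₀ := by
    intro i'
    rw [hUX, ← Matrix.mulVec_mulVec, hw]
    simp [Matrix.mulVec, dotProduct, Matrix.mul_apply, Matrix.diagonal_apply,
      Pi.single_apply, mul_ite, ite_mul, mul_comm]
  -- w ⬝ w ≤ θmax^2 * nmax
  have hZsum : ∑ i' : Fin n, (θ i' * Z i' k₀) ^ 2 ≤ θmax ^ 2 * (nmax : ℝ) := by
    have hcard : ((Finset.univ.filter fun i' => Z i' k₀ = 1).card : ℝ) ≤ (nmax : ℝ) := by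
      exact_mod_cast hnmax.2 ⟨k₀, rfl⟩
    calc ∑ i' : Fin n, (θ i' * Z i' k₀) ^ 2
        ≤ ∑ i' : Fin n, (if Z i' k₀ = 1 then θmax ^ 2 else 0) := by
          refine Finset.sum_le_sum fun i' _ => ?_
          rcases hZ01 i' k₀ with h | h
          · simp [h]
          · simp only [h, if_pos rfl, mul_one]
            have h1 := (hθ i').1
            have h2 := (hθ i').2
            have h0 : 0 ≤ θ i' := le_of_lt (lt_of_lt_of_le hθmin h1)
            exact pow_le_pow_left₀ h0 h2 2
      _ = θmax ^ 2 * (Finset.univ.filter fun i' => Z i' k₀ = 1).card := by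
          rw [← Finset.sum_filter]
          simp [Finset.sum_const, nsmul_eq_mul, mul_comm]
      _ ≤ θmax ^ 2 * (nmax : ℝ) := by
          exact mul_le_mul_of_nonneg_left hcard (sq_nonneg _)
  have hww : w ⬝ᵥ w ≤ θmax ^ 2 * (nmax : ℝ) := by
    have := hnorm w
    rw [show (U *ᵥ w) ⬝ᵥ (U *ᵥ w) = ∑ i' : Fin n, (θ i' * Z i' k₀)^2 from by
      simp [dotProduct, hUw, pow_two]] at this
    rw [← this]
    exact hZsum
  -- Cauchy-Schwarz: 1 ≤ (∑ X k₀ k ^ 2) * (w ⬝ w)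
  have hone : ∑ k, X k₀ k * w k = 1 := by
    have := congrFun hw k₀
    simpa [Matrix.mulVec, dotProduct] using this
  have hcs : (1 : ℝ) ≤ (∑ k, X k₀ k ^ 2) * ∑ k, w k ^ 2 := by
    have := Finset.sum_mul_sq_le_sq_mul_sq Finset.univ (fun k => X k₀ k) w
    rwa [hone, one_pow] at this
  have hwsq : ∑ k, w k ^ 2 = w ⬝ᵥ w := by simp [dotProduct, pow_two]
  have hXrow : 1 / (θmax ^ 2 * (nmax : ℝ)) ≤ ∑ k, X k₀ k ^ 2 := by
    have hpos : 0 < θmax ^ 2 * (nmax : ℝ) := by positivity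
    rw [div_le_iff₀ hpos]
    calc (1:ℝ) ≤ (∑ k, X k₀ k ^ 2) * ∑ k, w k ^ 2 := hcs
      _ ≤ (∑ k, X k₀ k ^ 2) * (θmax ^ 2 * (nmax : ℝ)) := by
          refine mul_le_mul_of_nonneg_left ?_ (by positivity)
          rw [hwsq]; exact hww
  -- row of U
  have hZval : ∀ j, Z i j = if j = k₀ then 1 else 0 := by
    intro j
    by_cases h : j = k₀
    · simp [h, hk₀]
    · rcases hZ01 i j with h0 | h1
      · simp [h, h0]
      · exact absurd (huniq j h1) h
  have hUi : ∀ k, U i k = θ i * X k₀ k := by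
    intro k
    rw [hUX, Matrix.mul_apply]
    have hDZ : ∀ j, (Matrix.diagonal θ * Z) i j = θ i * Z i j := by
      intro j
      simp [Matrix.mul_apply, Matrix.diagonal_apply]
    simp_rw [hDZ, hZval]
    simp [mul_ite, ite_mul, mul_assoc]
  have hsum : ∑ k, (U i k) ^ 2 = θ i ^ 2 * ∑ k, X k₀ k ^ 2 := by
    simp_rw [hUi, mul_pow, Finset.mul_sum]
  have hlow : θmin ^ 2 / (θmax ^ 2 * (nmax : ℝ)) ≤ ∑ k, (U i k) ^ 2 := by
    rw [hsum]
    calc θmin ^ 2 / (θmax ^ 2 * (nmax : ℝ)) = θmin ^ 2 * (1 / (θmax ^ 2 * (nmax : ℝ))) := by ring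
      _ ≤ θ i ^ 2 * ∑ k, X k₀ k ^ 2 :=
          mul_le_mul (pow_le_pow_left₀ hθmin.le hθi.1 2) hXrow (by positivity) (by positivity)
  refine Real.le_sqrt_of_sq_le ?_
  calc (θmin / (θmax * Real.sqrt nmax)) ^ 2 = θmin ^ 2 / (θmax ^ 2 * (nmax : ℝ)) := by
        rw [div_pow, mul_pow, Real.sq_sqrt hnmaxR.le]
    _ ≤ _ := hlow
end
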